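/- arXiv:2307.13946 — 6 statements merged into one kernel-verified Lean document; each statement's English description precedes it below -/
import Mathlib

section
/- For a finite group G, if H and K are subgroups in the Chermak-Delgado lattice CD(G), then the subgroup generated by H and K equals the set product HK (i.e., HK is a subgroup), and HK as well as H ∩ K lie in CD(G). -/
open Pointwise

noncomputable def mCD {G : Type*} [Group G] (H : Subgroup G) : ℕ :=
  Nat.card H * Nat.card (Subgroup.centralizer (H : Set G))

noncomputable def mStar (G : Type*) [Group G] : ℕ :=
  sSup (Set.range fun H : Subgroup G => mCD H)

noncomputable def CD (G : Type*) [Group G] : Set (Subgroup G) :=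
  {H | mCD H = mStar G}

noncomputable def deltaCD (G : Type*) [Group G] : ℕ :=
  Nat.card {H : Subgroup G // H ∉ CD G}
noncomputable def fiberEquivCD {G : Type*} [Group G] (H K : Subgroup G) (x : G)
    (h₀ k₀ : G) (hh₀ : h₀ ∈ H) (hk₀ : k₀ ∈ K) (hx : h₀ * k₀ = x) :
    {p : H × K // (p.1 : G) * (p.2 : G) = x} ≃ (H ⊓ K : Subgroup G) where
  toFun p := ⟨h₀⁻¹ * p.1.1, by
    refine Subgroup.mem_inf.mpr ⟨mul_mem (inv_mem hh₀) p.1.1.2, ?_⟩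
    have e : h₀⁻¹ * (p.1.1 : G) = k₀ * ((p.1.2 : G))⁻¹ := by
      rw [inv_mul_eq_iff_eq_mul, ← mul_assoc, eq_mul_inv_iff_mul_eq, hx]
      exact p.2
    rw [e]
    exact mul_mem hk₀ (inv_mem p.1.2.2)⟩
  invFun d := ⟨(⟨h₀ * d, mul_mem hh₀ (Subgroup.mem_inf.mp d.2).1⟩,
      ⟨(d : G)⁻¹ * k₀, mul_mem (inv_mem (Subgroup.mem_inf.mp d.2).2) hk₀⟩), by
    show h₀ * (d : G) * ((d : G)⁻¹ * k₀) = x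
    rw [mul_assoc, mul_inv_cancel_left, hx]⟩
  left_inv := by
    rintro ⟨⟨⟨h, hh⟩, ⟨k, hk⟩⟩, hp⟩
    have hp' : h * k = x := hp
    ext
    · show h₀ * (h₀⁻¹ * h) = h
      rw [mul_inv_cancel_left]
    · show (h₀⁻¹ * h)⁻¹ * k₀ = k
      rw [mul_inv_rev, inv_inv, mul_assoc, hx, ← hp', inv_mul_cancel_left]
  right_inv := by
    rintro ⟨d, hd⟩
    ext
    show h₀⁻¹ * (h₀ * d) = d
    rw [inv_mul_cancel_left]

lemma card_mul_card_infCD {G : Type*} [Group G] (H K : Subgroup G) :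
    Nat.card ((H : Set G) * (K : Set G) : Set G) * Nat.card (H ⊓ K : Subgroup G)
      = Nat.card H * Nat.card K := by
  classical
  set S : Set G := (H : Set G) * (K : Set G) with hS
  let f : H × K → S := fun p => ⟨(p.1 : G) * p.2, Set.mul_mem_mul p.1.2 p.2.2⟩
  have hmem : ∀ x : S, ∃ h₀ ∈ (H : Set G), ∃ k₀ ∈ (K : Set G), h₀ * k₀ = (x : G) :=
    fun x => Set.mem_mul.mp x.2
  choose h₀ hh₀ k₀ hk₀ hx using hmem
  have e1 : (H × K) ≃ Σ x : S, {p : H × K // (p.1 : G) * (p.2 : G) = x} := by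
    refine (Equiv.sigmaFiberEquiv f).symm.trans (Equiv.sigmaCongrRight fun x => ?_)
    exact Equiv.subtypeEquivRight fun p => by
      constructor
      · intro h; exact congrArg Subtype.val h
      · intro h; exact Subtype.ext h
  have e2 : (Σ x : S, {p : H × K // (p.1 : G) * (p.2 : G) = x}) ≃ S × (H ⊓ K : Subgroup G) :=
    (Equiv.sigmaCongrRight fun x : S =>
      fiberEquivCD H K (x : G) (h₀ x) (k₀ x) (hh₀ x) (hk₀ x) (hx x)).trans
      (Equiv.sigmaEquivProd _ _)
  have := Nat.card_congr (e1.trans e2)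
  rw [Nat.card_prod, Nat.card_prod] at this
  omega

lemma centralizer_supCD {G : Type*} [Group G] (H K : Subgroup G) :
    Subgroup.centralizer ((H ⊔ K : Subgroup G) : Set G)
      = Subgroup.centralizer H ⊓ Subgroup.centralizer K := by
  apply le_antisymm
  · exact le_inf (Subgroup.centralizer_le (SetLike.coe_subset_coe.2 le_sup_left))
      (Subgroup.centralizer_le (SetLike.coe_subset_coe.2 le_sup_right))
  · rw [← Subgroup.le_centralizer_iff]
    exact sup_le (Subgroup.le_centralizer_iff.mp inf_le_left)
      (Subgroup.le_centralizer_iff.mp inf_le_right)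

lemma mCD_le_mStarCD {G : Type*} [Group G] [Finite G] (H : Subgroup G) : mCD H ≤ mStar G :=
  le_csSup (Set.Finite.bddAbove (Set.finite_range _)) (Set.mem_range_self H)

theorem stmt2 {G : Type*} [Group G] [Finite G] (H K : Subgroup G)
    (hH : H ∈ CD G) (hK : K ∈ CD G) :
    ((H ⊔ K : Subgroup G) : Set G) = (H : Set G) * (K : Set G) ∧
      H ⊔ K ∈ CD G ∧ H ⊓ K ∈ CD G := by
  classical
  have hH' : mCD H = mStar G := hH
  have hK' : mCD K = mStar G := hK
  set m := mStar G with hm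
  set a := Nat.card ((H : Set G) * (K : Set G) : Set G) with ha
  set b := Nat.card (H ⊓ K : Subgroup G) with hb
  set c := Nat.card ((Subgroup.centralizer (H : Set G) : Set G) *
      (Subgroup.centralizer (K : Set G) : Set G) : Set G) with hc
  set d := Nat.card (Subgroup.centralizer ((H ⊔ K : Subgroup G) : Set G)) with hd
  set J := Nat.card (H ⊔ K : Subgroup G) with hJ
  set Ci := Nat.card (Subgroup.centralizer ((H ⊓ K : Subgroup G) : Set G)) with hCi
  have h1 : a * b = Nat.card H * Nat.card K := card_mul_card_infCD H K
  have h2 : c * d = Nat.card (Subgroup.centralizer (H : Set G)) *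
      Nat.card (Subgroup.centralizer (K : Set G)) := by
    have h := card_mul_card_infCD (Subgroup.centralizer (H : Set G))
      (Subgroup.centralizer (K : Set G))
    rwa [← centralizer_supCD H K] at h
  have hsub1 : (H : Set G) * (K : Set G) ⊆ ((H ⊔ K : Subgroup G) : Set G) := by
    rw [Set.mul_subset_iff]
    intro x hx y hy
    exact mul_mem ((le_sup_left : H ≤ H ⊔ K) hx) ((le_sup_right : K ≤ H ⊔ K) hy)
  have hsub2 : (Subgroup.centralizer (H : Set G) : Set G) *
      (Subgroup.centralizer (K : Set G) : Set G)
      ⊆ ((Subgroup.centralizer ((H ⊓ K : Subgroup G) : Set G)) : Set G) := by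
    rw [Set.mul_subset_iff]
    intro x hx y hy
    exact mul_mem (Subgroup.centralizer_le (SetLike.coe_subset_coe.2 inf_le_left) hx)
      (Subgroup.centralizer_le (SetLike.coe_subset_coe.2 inf_le_right) hy)
  have haJ : a ≤ J := by
    have := Nat.card_mono (Set.toFinite _) hsub1
    rwa [SetLike.coe_sort_coe] at this
  have hcCi : c ≤ Ci := by
    have := Nat.card_mono (Set.toFinite _) hsub2
    rwa [SetLike.coe_sort_coe] at this
  have hbpos : 0 < b := Nat.card_pos
  have hdpos : 0 < d := Nat.card_pos
  have hCipos : 0 < Ci := Nat.card_pos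
  have hJpos : 0 < J := Nat.card_pos
  have hmm : m * m = (a * b) * (c * d) := by
    calc m * m = mCD H * mCD K := by rw [hH', hK']
      _ = (Nat.card H * Nat.card K) *
          (Nat.card (Subgroup.centralizer (H : Set G)) *
            Nat.card (Subgroup.centralizer (K : Set G))) := by rw [mCD, mCD]; ring
      _ = (a * b) * (c * d) := by rw [h1, h2]
  have hjoin : mCD (H ⊔ K) = J * d := rfl
  have hinf : mCD (H ⊓ K) = b * Ci := rfl
  have key : m * m ≤ mCD (H ⊔ K) * mCD (H ⊓ K) := by
    rw [hmm, hjoin, hinf]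
    calc (a * b) * (c * d) = (a * c) * (b * d) := by ring
      _ ≤ (J * Ci) * (b * d) := Nat.mul_le_mul (Nat.mul_le_mul haJ hcCi) le_rfl
      _ = (J * d) * (b * Ci) := by ring
  have hJle : mCD (H ⊔ K) ≤ m := mCD_le_mStarCD _
  have hIle : mCD (H ⊓ K) ≤ m := mCD_le_mStarCD _
  have hmpos : 0 < m := by
    rw [← hH', mCD]; exact Nat.mul_pos Nat.card_pos Nat.card_pos
  have hIm : mCD (H ⊓ K) = m := by
    have h3 : m * m ≤ m * mCD (H ⊓ K) :=
      le_trans key (Nat.mul_le_mul hJle le_rfl)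
    exact le_antisymm hIle (Nat.le_of_mul_le_mul_left h3 hmpos)
  have hJm : mCD (H ⊔ K) = m := by
    have h3 : m * m ≤ m * mCD (H ⊔ K) := by
      calc m * m ≤ mCD (H ⊔ K) * mCD (H ⊓ K) := key
        _ ≤ mCD (H ⊔ K) * m := Nat.mul_le_mul le_rfl hIle
        _ = m * mCD (H ⊔ K) := Nat.mul_comm _ _
    exact le_antisymm hJle (Nat.le_of_mul_le_mul_left h3 hmpos)
  -- equality of products gives a = J
  have heq : (a * c) * (b * d) = (J * Ci) * (b * d) := by
    have : (J * d) * (b * Ci) = m * m := by rw [← hjoin, ← hinf, hJm, hIm]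
    calc (a * c) * (b * d) = (a * b) * (c * d) := by ring
      _ = m * m := hmm.symm
      _ = (J * d) * (b * Ci) := this.symm
      _ = (J * Ci) * (b * d) := by ring
  have hac : a * c = J * Ci := Nat.eq_of_mul_eq_mul_right (Nat.mul_pos hbpos hdpos) heq
  have hcCi' : c = Ci := by
    have : J * Ci ≤ J * c := by
      calc J * Ci = a * c := hac.symm
        _ ≤ J * c := Nat.mul_le_mul haJ le_rfl
    exact le_antisymm hcCi (Nat.le_of_mul_le_mul_left this hJpos)
  have haJ' : a = J := by
    have h5 := hac
    rw [hcCi'] at h5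
    exact Nat.eq_of_mul_eq_mul_right hCipos h5
  have hset : (H : Set G) * (K : Set G) = ((H ⊔ K : Subgroup G) : Set G) := by
    refine Set.eq_of_subset_of_ncard_le hsub1 ?_ (Set.toFinite _)
    rw [← Nat.card_coe_set_eq, ← Nat.card_coe_set_eq, SetLike.coe_sort_coe]
    exact le_of_eq haJ'.symm
  exact ⟨hset.symm, hJm, hIm⟩
end

section
/- Let G be a finite p-group such that the number of subgroups of G not belonging to CD(G) is at most p² + p. Then G has no elementary abelian subgroup of rank 3, i.e., no subgroup isomorphic to C_p × C_p × C_p. -/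
/-! CD(G) is closed under intersection, since `m(H) m(K) ≤ m(H ⊓ K) m(H ⊔ K)` and `m ≤ m*`.
A nontrivial p-group has a nontrivial centre, so `m(1) = |G| < |G| |Z(G)| = m(G)` and the trivial
subgroup is not in CD(G). Two distinct subgroups of order p meet trivially, so at most one of them
lies in CD(G). An elementary abelian subgroup of rank 3 has `p² + p + 1` subgroups of order p, so
at least `p² + p` of them, together with the trivial subgroup, lie outside CD(G). -/

open Subgroup

section
variable {G : Type*} [Group G]

theorem Subgroup.centralizer_sup (H K : Subgroup G) :
    centralizer ((H ⊔ K : Subgroup G) : Set G) = centralizer H ⊓ centralizer K := by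
  rw [← H.closure_eq, ← K.closure_eq, ← closure_union, centralizer_closure, closure_eq, closure_eq]
  exact SetLike.ext' (Set.centralizer_union ..)

variable [Finite G]

theorem Subgroup.card_mul_card_le_card_inf_mul_card_sup (H K : Subgroup G) :
    Nat.card H * Nat.card K ≤ Nat.card ↥(H ⊓ K) * Nat.card ↥(H ⊔ K) := by
  have hH := relIndex_mul_relIndex ⊥ (H ⊓ K) H bot_le inf_le_left
  have hsup := relIndex_mul_relIndex ⊥ K (H ⊔ K) bot_le le_sup_right
  simp only [relIndex_bot_left, inf_relIndex_left] at hH hsup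
  have hle : K.relIndex H ≤ K.relIndex (H ⊔ K) :=
    relIndex_le_of_le_right le_sup_left index_ne_zero_of_finite
  calc Nat.card H * Nat.card K = Nat.card ↥(H ⊓ K) * Nat.card K * K.relIndex H := by
        rw [← hH]; ring
    _ ≤ Nat.card ↥(H ⊓ K) * Nat.card K * K.relIndex (H ⊔ K) := by gcongr
    _ = Nat.card ↥(H ⊓ K) * Nat.card ↥(H ⊔ K) := by rw [mul_assoc, hsup]

theorem mCD_mul_mCD_le_mCD_inf_mul_mCD_sup (H K : Subgroup G) :
    mCD H * mCD K ≤ mCD (H ⊓ K) * mCD (H ⊔ K) := by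
  have hcent : Nat.card (centralizer (H : Set G)) * Nat.card (centralizer (K : Set G)) ≤
      Nat.card (centralizer ((H ⊔ K : Subgroup G) : Set G)) *
        Nat.card (centralizer ((H ⊓ K : Subgroup G) : Set G)) := by
    rw [centralizer_sup]
    refine (card_mul_card_le_card_inf_mul_card_sup _ _).trans (Nat.mul_le_mul_left _ ?_)
    exact card_le_of_le (sup_le (centralizer_le inf_le_left) (centralizer_le inf_le_right))
  calc mCD H * mCD K
      = Nat.card H * Nat.card K *
          (Nat.card (centralizer (H : Set G)) * Nat.card (centralizer (K : Set G))) := by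
        unfold mCD; ring
    _ ≤ Nat.card ↥(H ⊓ K) * Nat.card ↥(H ⊔ K) *
          (Nat.card (centralizer ((H ⊔ K : Subgroup G) : Set G)) *
            Nat.card (centralizer ((H ⊓ K : Subgroup G) : Set G))) :=
        Nat.mul_le_mul (card_mul_card_le_card_inf_mul_card_sup H K) hcent
    _ = mCD (H ⊓ K) * mCD (H ⊔ K) := by unfold mCD; ring

theorem mCD_le_mStar (H : Subgroup G) : mCD H ≤ mStar G :=
  le_csSup (Set.finite_range _).bddAbove ⟨H, rfl⟩

theorem mStar_pos : 0 < mStar G :=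
  (Nat.mul_pos Nat.card_pos Nat.card_pos).trans_le (mCD_le_mStar ⊥)

theorem inf_mem_CD {H K : Subgroup G} (hH : H ∈ CD G) (hK : K ∈ CD G) : H ⊓ K ∈ CD G := by
  have key := mCD_mul_mCD_le_mCD_inf_mul_mCD_sup H K
  rw [hH, hK] at key
  refine (mCD_le_mStar _).antisymm (Nat.le_of_mul_le_mul_right ?_ (mStar_pos (G := G)))
  exact key.trans (Nat.mul_le_mul_left _ (mCD_le_mStar _))

theorem bot_notMem_CD [Nontrivial (center G)] : (⊥ : Subgroup G) ∉ CD G := by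
  intro (hbot : mCD ⊥ = mStar G)
  have htop := mCD_le_mStar (⊤ : Subgroup G)
  rw [← hbot] at htop
  simp only [mCD, card_top, coe_top, centralizer_univ, card_bot, coe_bot, one_mul,
    centralizer_eq_top_iff_subset.mpr (Set.singleton_subset_iff.mpr (one_mem _))] at htop
  have := Finite.one_lt_card_iff_nontrivial.mpr ‹Nontrivial (center G)›
  nlinarith [Nat.card_pos (α := G)]

theorem eq_of_mem_CD_of_card_eq_prime [Nontrivial (center G)] {p : ℕ} (hp : p.Prime)
    {P Q : Subgroup G} (hP : Nat.card P = p) (hQ : Nat.card Q = p)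
    (hPCD : P ∈ CD G) (hQCD : Q ∈ CD G) : P = Q := by
  by_contra hne
  have hinf_ne : P ⊓ Q ≠ P := fun h =>
    hne (eq_of_le_of_card_ge (h ▸ inf_le_right) (hQ.trans hP.symm).le)
  have hinf : P ⊓ Q = ⊥ := by
    rcases (Nat.dvd_prime hp).mp (hP ▸ card_dvd_of_le inf_le_left) with h | h
    · exact card_eq_one.mp h
    · exact absurd (eq_of_le_of_card_ge inf_le_left (hP.trans h.symm).le) hinf_ne
  exact bot_notMem_CD (hinf ▸ inf_mem_CD hPCD hQCD)

theorem ncard_le_deltaCD_of_card_eq_prime [Nontrivial (center G)] {p : ℕ} (hp : p.Prime)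
    {S : Set (Subgroup G)} (hS : ∀ K ∈ S, Nat.card K = p) : S.ncard ≤ deltaCD G := by
  have hCD : (S ∩ CD G).ncard ≤ 1 := (Set.ncard_le_one_iff (Set.toFinite _)).mpr fun hP hQ =>
    eq_of_mem_CD_of_card_eq_prime hp (hS _ hP.1) (hS _ hQ.1) hP.2 hQ.2
  have hbot : ⊥ ∉ S \ CD G := fun h => hp.one_lt.ne (card_bot (G := G) ▸ hS ⊥ h.1)
  calc S.ncard = (S ∩ CD G).ncard + (S \ CD G).ncard :=
        (Set.ncard_inter_add_ncard_sdiff_eq_ncard ..).symm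
    _ ≤ (insert ⊥ (S \ CD G)).ncard := by rw [Set.ncard_insert_of_notMem hbot]; omega
    _ ≤ {K | K ∉ CD G}.ncard :=
        Set.ncard_le_ncard (Set.insert_subset bot_notMem_CD fun _ hK => hK.2)
    _ = deltaCD G := rfl

theorem card_sub_one_le_mul_ncard_subgroups_card_eq_prime {p : ℕ} (hp : p.Prime)
    (hG : ∀ g : G, g ^ p = 1) :
    Nat.card G - 1 ≤ (p - 1) * {K : Subgroup G | Nat.card K = p}.ncard := by
  have : Fact p.Prime := ⟨hp⟩
  set T := {K : Subgroup G | Nat.card K = p}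
  have hT : T.Finite := Set.toFinite T
  have hcover : (Set.univ \ {1} : Set G) ⊆ ⋃ K ∈ hT.toFinset, (K : Set G) \ {1} := by
    intro g ⟨_, hg⟩
    simp only [Set.mem_iUnion, Set.Finite.mem_toFinset]
    exact ⟨zpowers g, by rw [Set.mem_ofPred_eq, Nat.card_zpowers, orderOf_eq_prime (hG g) hg],
      mem_zpowers g, hg⟩
  calc Nat.card G - 1 = (Set.univ \ {1} : Set G).ncard := by
        rw [Set.ncard_sdiff_singleton_of_mem (Set.mem_univ 1), Set.ncard_univ]
    _ ≤ (⋃ K ∈ hT.toFinset, (K : Set G) \ {1}).ncard := Set.ncard_le_ncard hcover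
    _ ≤ ∑ K ∈ hT.toFinset, ((K : Set G) \ {1}).ncard := Finset.set_ncard_biUnion_le _ _
    _ ≤ hT.toFinset.card • (p - 1) := Finset.sum_le_card_nsmul _ _ _ fun K hK => by
        rw [Set.ncard_sdiff_singleton_of_mem (one_mem K), ← Nat.card_coe_set_eq]
        exact (congrArg (· - 1) (hT.mem_toFinset.mp hK)).le
    _ = (p - 1) * T.ncard := by rw [smul_eq_mul, mul_comm, Set.ncard_eq_toFinset_card T hT]

end

theorem sq_add_self_add_one_le_ncard_subgroups_card_eq_prime {p : ℕ} [Fact p.Prime] :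
    p ^ 2 + p + 1 ≤
      {K : Subgroup (Multiplicative (ZMod p × ZMod p × ZMod p)) | Nat.card K = p}.ncard := by
  have hp : p.Prime := Fact.out
  have hcount := card_sub_one_le_mul_ncard_subgroups_card_eq_prime
    (G := Multiplicative (ZMod p × ZMod p × ZMod p)) hp fun v =>
    Multiplicative.toAdd.injective <| by
      rw [toAdd_pow, toAdd_one, ← Nat.cast_smul_eq_nsmul (ZMod p), ZMod.natCast_self, zero_smul]
  have hcube : p * (p * p) - 1 = (p - 1) * (p ^ 2 + p + 1) := by
    obtain ⟨k, rfl⟩ : ∃ k, p = k + 1 := ⟨p - 1, (Nat.succ_pred_eq_of_pos hp.pos).symm⟩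
    simp only [Nat.add_sub_cancel]
    ring_nf
    omega
  rw [Nat.card_congr Multiplicative.toAdd, Nat.card_prod, Nat.card_prod, Nat.card_zmod,
    hcube] at hcount
  exact Nat.le_of_mul_le_mul_left hcount (Nat.sub_pos_of_lt hp.one_lt)

theorem stmt4 {p : ℕ} [Fact p.Prime] {G : Type*} [Group G] [Finite G]
    (hG : IsPGroup p G) (h : deltaCD G ≤ p ^ 2 + p) :
    ¬ ∃ H : Subgroup G,
        Nonempty (H ≃* Multiplicative (ZMod p × ZMod p × ZMod p)) := by
  rintro ⟨H, ⟨e⟩⟩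
  let ι := H.subtype.comp e.symm.toMonoidHom
  have hι : Function.Injective ι := H.subtype_injective.comp e.symm.injective
  have : Nontrivial G := hι.nontrivial
  have := hG.center_nontrivial
  have hS := ncard_le_deltaCD_of_card_eq_prime (S := map ι '' {K | Nat.card K = p}) Fact.out
    (by rintro _ ⟨K, hK, rfl⟩; rwa [card_map_of_injective hι])
  rw [Set.ncard_image_of_injective _ (map_injective hι)] at hS
  have := sq_add_self_add_one_le_ncard_subgroups_card_eq_prime (p := p)
  omega
end

section
/- Let p be a prime, s ≥ 1, and let G = C_{p^s} × C_p. Then the number of subgroups of G not in CD(G) equals s(p+1) + 1. -/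
open AddSubgroup

lemma zmodB {p s a : ℕ} [NeZero (p^s)] (ha : a ≤ s) (u : ℤ) :
    ((p : ZMod (p^s))^a ∣ (u : ZMod (p^s))) ↔ (p:ℤ)^a ∣ u := by
  constructor
  · rintro ⟨v, hv⟩
    have h : ((u - (p:ℤ)^a * (v.val : ℤ) : ℤ) : ZMod (p^s)) = 0 := by
      push_cast
      rw [hv]
      simp [ZMod.natCast_val, ZMod.cast_id]
    rw [ZMod.intCast_zmod_eq_zero_iff_dvd] at h
    have h1 : (p:ℤ)^a ∣ (p:ℤ)^s := pow_dvd_pow _ ha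
    have h2 : (p:ℤ)^a ∣ u - (p:ℤ)^a * (v.val:ℤ) := h1.trans (by exact_mod_cast h)
    have h3 := dvd_add h2 (Dvd.intro (v.val:ℤ) rfl)
    simpa using h3
  · rintro ⟨w, rfl⟩
    push_cast
    exact Dvd.intro _ rfl

lemma mem_zmul_iff {n : ℕ} [NeZero n] (c x : ZMod n) : x ∈ zmultiples c ↔ c ∣ x := by
  rw [mem_zmultiples_iff]
  constructor
  · rintro ⟨k, rfl⟩
    exact ⟨(k : ZMod n), by rw [zsmul_eq_mul, mul_comm]⟩
  · rintro ⟨d, rfl⟩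
    exact ⟨(d.val : ℤ), by simp [zsmul_eq_mul, ZMod.natCast_val, ZMod.cast_id, mul_comm]⟩

lemma zmul_eq_zmul {n : ℕ} [NeZero n] {c d : ZMod n} (h1 : c ∣ d) (h2 : d ∣ c) :
    zmultiples c = zmultiples d := by
  ext x
  rw [mem_zmul_iff, mem_zmul_iff]
  exact ⟨fun h => h2.trans h, fun h => h1.trans h⟩

lemma subgroup_eq_zmultiples {n : ℕ} (K : AddSubgroup (ZMod n)) : ∃ x : ZMod n, K = zmultiples x := by
  obtain ⟨⟨g, hgK⟩, hg⟩ := IsAddCyclic.exists_generator (α := K)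
  refine ⟨g, le_antisymm (fun x hx => ?_) (zmultiples_le_of_mem hgK)⟩
  obtain ⟨k, hk⟩ := hg ⟨x, hx⟩
  exact mem_zmultiples_iff.mpr ⟨k, congrArg Subtype.val hk⟩

lemma elt_assoc_pow {p s : ℕ} [Fact p.Prime] (hs : 1 ≤ s) (x : ZMod (p^s)) :
    ∃ a ≤ s, zmultiples x = zmultiples ((p : ZMod (p^s))^a) := by
  haveI : NeZero (p^s) := ⟨pow_ne_zero s (Fact.out : p.Prime).ne_zero⟩
  have hp : p.Prime := Fact.out
  by_cases hx : x = 0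
  · refine ⟨s, le_rfl, ?_⟩
    have : ((p : ZMod (p^s)))^s = 0 := by
      rw [← Nat.cast_pow, ZMod.natCast_self]
    rw [hx, this]
  · have hv : x.val ≠ 0 := fun h => hx (by rwa [← ZMod.val_eq_zero])
    set a := x.val.factorization p with ha
    have hdvd : p^a ∣ x.val := Nat.ordProj_dvd _ _
    have halt : a ≤ s := by
      by_contra h
      push_neg at h
      have : p^s < p^a := Nat.pow_lt_pow_right hp.one_lt h
      have hle : p^a ≤ x.val := Nat.le_of_dvd (Nat.pos_of_ne_zero hv) hdvd
      have := x.val_lt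
      omega
    refine ⟨a, halt, ?_⟩
    obtain ⟨m, hm⟩ : ∃ m, x.val = p ^ a * m := hdvd
    have hmp : Nat.Coprime m (p^s) := by
      have h1 : Nat.Coprime p m := by
        have h0 := Nat.coprime_ordCompl hp hv
        have hdiv : x.val / p ^ a = m := by rw [hm]; exact Nat.mul_div_cancel_left _ (pow_pos hp.pos a)
        rwa [← ha, hdiv] at h0
      exact (Nat.Coprime.pow_right s h1.symm)
    have hu : IsUnit (m : ZMod (p^s)) := (ZMod.isUnit_iff_coprime m (p^s)).mpr hmp
    have hxeq : x = (p : ZMod (p^s))^a * (m : ZMod (p^s)) := by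
      have : ((x.val : ℕ) : ZMod (p^s)) = x := by rw [ZMod.natCast_val, ZMod.cast_id]
      rw [← this, hm]
      push_cast
      ring
    have hxd : x ∣ (p : ZMod (p^s))^a := by
      obtain ⟨u, hu'⟩ := hu
      refine ⟨(↑u⁻¹ : ZMod (p^s)), ?_⟩
      rw [hxeq, ← hu', mul_assoc, ← Units.val_mul, mul_inv_cancel, Units.val_one, mul_one]
    exact zmul_eq_zmul hxd ⟨(m : ZMod (p^s)), hxeq⟩


variable {p s : ℕ}

/-- the subgroups contained in the first factor -/
def zmA (p s a : ℕ) : AddSubgroup (ZMod (p^s) × ZMod p) :=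
  (zmultiples ((p : ZMod (p^s))^a)).prod ⊥

/-- the subgroups projecting onto the second factor, other than ⊤ -/
def CgenA (p s b j : ℕ) : AddSubgroup (ZMod (p^s) × ZMod p) :=
  closure {((p : ZMod (p^s))^(b+1), 0), ((p : ZMod (p^s))^b * j, 1)}

lemma mem_CgenA {b j : ℕ} {x : ZMod (p^s) × ZMod p} :
    x ∈ CgenA p s b j ↔ ∃ m k : ℤ,
      m • (((p : ZMod (p^s))^(b+1), (0 : ZMod p))) + k • (((p : ZMod (p^s))^b * j, (1 : ZMod p))) = x :=
  AddSubgroup.mem_closure_pair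

def Kof (H : AddSubgroup (ZMod (p^s) × ZMod p)) : AddSubgroup (ZMod (p^s)) :=
  H.comap (AddMonoidHom.inl _ _)

lemma mem_Kof {H : AddSubgroup (ZMod (p^s) × ZMod p)} {x : ZMod (p^s)} :
    x ∈ Kof H ↔ (x, (0:ZMod p)) ∈ H := Iff.rfl

lemma Kof_top : Kof (⊤ : AddSubgroup (ZMod (p^s) × ZMod p)) = ⊤ := rfl

lemma Kof_zmA (a : ℕ) : Kof (zmA p s a) = zmultiples ((p : ZMod (p^s))^a) := by
  ext x
  simp [mem_Kof, zmA, AddSubgroup.mem_prod]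

lemma Kof_CgenA [NeZero (p^s)] [Fact p.Prime] {b j : ℕ} (hb : b + 1 ≤ s) :
    Kof (CgenA p s b j) = zmultiples ((p : ZMod (p^s))^(b+1)) := by
  ext y
  rw [mem_Kof, mem_CgenA, mem_zmul_iff]
  constructor
  · rintro ⟨m, k, h⟩
    rw [Prod.smul_mk, Prod.smul_mk, Prod.mk_add_mk, Prod.mk.injEq] at h
    obtain ⟨h1, h2⟩ := h
    have hk : (k : ZMod p) = 0 := by simpa [zsmul_eq_mul] using h2
    obtain ⟨k', rfl⟩ := (ZMod.intCast_zmod_eq_zero_iff_dvd k p).mp hk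
    refine ⟨(m : ZMod (p^s)) + (k' : ZMod (p^s)) * (j : ZMod (p^s)), ?_⟩
    rw [← h1]
    simp only [zsmul_eq_mul]
    push_cast
    ring
  · rintro ⟨d, rfl⟩
    refine ⟨(d.val : ℤ), 0, ?_⟩
    simp [zsmul_eq_mul, ZMod.natCast_val, ZMod.cast_id, mul_comm]

lemma zmul_le_zmul [Fact p.Prime] [NeZero (p^s)] {u v : ℕ} (hu : u ≤ s) (hv : v ≤ s)
    (h : zmultiples ((p:ZMod (p^s))^u) ≤ zmultiples ((p:ZMod (p^s))^v)) : v ≤ u := by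
  have hp : p.Prime := Fact.out
  have h1 : ((p:ZMod (p^s))^v) ∣ ((p:ZMod (p^s))^u) :=
    (mem_zmul_iff _ _).mp (h (mem_zmultiples _))
  have h2 : ((p:ZMod (p^s))^u) = (((p:ℤ)^u : ℤ) : ZMod (p^s)) := by push_cast; ring
  rw [h2] at h1
  have h3 : (p:ℤ)^v ∣ (p:ℤ)^u := (zmodB hv _).mp h1
  have hnu : ¬IsUnit (p:ℤ) := by
    rw [Int.isUnit_iff]
    have := hp.two_le
    omega
  exact (pow_dvd_pow_iff (by exact_mod_cast hp.ne_zero) hnu).mp h3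

lemma zm_inj [Fact p.Prime] [NeZero (p^s)] {a a' : ℕ} (ha : a ≤ s) (ha' : a' ≤ s)
    (h : zmultiples ((p:ZMod (p^s))^a) = zmultiples ((p:ZMod (p^s))^a')) : a = a' :=
  le_antisymm (zmul_le_zmul ha' ha h.ge) (zmul_le_zmul ha ha' h.le)

lemma mem_snd_CgenA {b j : ℕ} : ((p:ZMod (p^s))^b * j, (1:ZMod p)) ∈ CgenA p s b j :=
  AddSubgroup.subset_closure (by simp)

lemma zmA_no_one [Fact p.Prime] {a : ℕ} (x : ZMod (p^s)) : (x, (1:ZMod p)) ∉ zmA p s a := by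
  intro h
  rw [zmA, AddSubgroup.mem_prod] at h
  exact one_ne_zero (AddSubgroup.mem_bot.mp h.2)

lemma CgenA_j_inj [Fact p.Prime] [NeZero (p^s)] {b j j' : ℕ} (hb : b + 1 ≤ s)
    (hj : j < p) (hj' : j' < p) (h : CgenA p s b j = CgenA p s b j') : j = j' := by
  have hp : p.Prime := Fact.out
  have hmem : ((p:ZMod (p^s))^b * j, (1:ZMod p)) ∈ CgenA p s b j' := h ▸ mem_snd_CgenA
  rw [mem_CgenA] at hmem
  obtain ⟨m, k, hmk⟩ := hmem
  rw [Prod.smul_mk, Prod.smul_mk, Prod.mk_add_mk, Prod.mk.injEq] at hmk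
  obtain ⟨h1, h2⟩ := hmk
  have hk1 : (k : ZMod p) = 1 := by simpa [zsmul_eq_mul] using h2
  have hk : ((k - 1 : ℤ) : ZMod p) = 0 := by push_cast [hk1]; ring
  obtain ⟨t, ht⟩ := (ZMod.intCast_zmod_eq_zero_iff_dvd _ p).mp hk
  have hkeq : k = 1 + p * t := by omega
  subst hkeq
  simp only [zsmul_eq_mul] at h1
  have hdvd : ((p:ZMod (p^s))^(b+1)) ∣ (((p:ℤ)^b * ((j:ℤ) - (j':ℤ)) : ℤ) : ZMod (p^s)) := by
    refine ⟨(m : ZMod (p^s)) + (t : ZMod (p^s)) * (j' : ZMod (p^s)), ?_⟩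
    push_cast
    push_cast at h1
    linear_combination -h1
  have h3 : (p:ℤ)^(b+1) ∣ (p:ℤ)^b * ((j:ℤ) - (j':ℤ)) := (zmodB hb _).mp hdvd
  have h4 : (p:ℤ) ∣ ((j:ℤ) - (j':ℤ)) := by
    rw [pow_succ] at h3
    rcases h3 with ⟨c, hc⟩
    refine ⟨c, ?_⟩
    have hpb : ((p:ℤ)^b) ≠ 0 := pow_ne_zero _ (by exact_mod_cast hp.ne_zero)
    have := mul_left_cancel₀ hpb (by linarith [hc] : (p:ℤ)^b * ((j:ℤ) - j') = (p:ℤ)^b * ((p:ℤ) * c))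
    linarith [this]
  have h5 : ((j:ℤ) - (j':ℤ)) = 0 := Int.eq_zero_of_abs_lt_dvd h4 (by
    rw [abs_lt]
    constructor <;> [omega; omega])
  omega

lemma classify [Fact p.Prime] [NeZero (p^s)] (hs : 1 ≤ s)
    (H : AddSubgroup (ZMod (p^s) × ZMod p)) :
    (∃ a ≤ s, H = zmA p s a) ∨ (∃ b, b + 1 ≤ s ∧ ∃ j < p, H = CgenA p s b j) ∨ H = ⊤ := by
  have hp : p.Prime := Fact.out
  haveI : NeZero p := ⟨hp.ne_zero⟩
  obtain ⟨x0, hx0⟩ := subgroup_eq_zmultiples (Kof H)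
  obtain ⟨a, ha, hza⟩ := elt_assoc_pow hs x0
  have hK : Kof H = zmultiples ((p:ZMod (p^s))^a) := hx0.trans hza
  by_cases hone : ∃ x, (x, (1:ZMod p)) ∈ H
  · obtain ⟨x, hx⟩ := hone
    have hpx : ((p:ZMod (p^s)) * x, (0:ZMod p)) ∈ H := by
      have h1 : (p:ℕ) • ((x, (1:ZMod p))) ∈ H := AddSubgroup.nsmul_mem H hx p
      have h2 : (p:ℕ) • ((x, (1:ZMod p))) = ((p:ZMod (p^s)) * x, (0:ZMod p)) := by
        rw [Prod.smul_mk, Prod.mk.injEq]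
        constructor
        · rw [nsmul_eq_mul]
        · rw [nsmul_eq_mul, mul_one, ZMod.natCast_self]
      rwa [h2] at h1
    have hdvd : ((p:ZMod (p^s))^a) ∣ (p:ZMod (p^s)) * x := by
      rw [← mem_zmul_iff, ← hK, mem_Kof]
      exact hpx
    by_cases haz : a = 0
    · right; right
      subst haz
      ext ⟨y, z⟩
      simp only [AddSubgroup.mem_top, iff_true]
      have h1 : (y - (z.val:ℕ) • x, (0:ZMod p)) ∈ H := by
        rw [← mem_Kof, hK, mem_zmul_iff, pow_zero]
        exact one_dvd _
      have h2 : (z.val:ℕ) • ((x, (1:ZMod p))) ∈ H := AddSubgroup.nsmul_mem H hx _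
      have h3 := AddSubgroup.add_mem H h1 h2
      have h4 : (y - (z.val:ℕ) • x, (0:ZMod p)) + (z.val:ℕ) • ((x, (1:ZMod p))) = (y, z) := by
        rw [Prod.smul_mk, Prod.mk_add_mk, Prod.mk.injEq]
        constructor
        · ring
        · rw [nsmul_eq_mul, mul_one, zero_add, ZMod.natCast_val, ZMod.cast_id]
      rwa [h4] at h3
    · -- a ≥ 1
      have hb : a - 1 + 1 = a := by omega
      set b := a - 1 with hbdef
      -- p^b divides x
      have hxval : ((x.val : ℤ) : ZMod (p^s)) = x := by push_cast [ZMod.natCast_val, ZMod.cast_id]; rfl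
      have hZdvd : (p:ℤ)^a ∣ (p:ℤ) * (x.val:ℤ) := by
        have : ((((p:ℤ) * (x.val:ℤ)) : ℤ) : ZMod (p^s)) = (p:ZMod (p^s)) * x := by
          push_cast [ZMod.natCast_val, ZMod.cast_id]; rfl
        exact (zmodB ha _).mp (this ▸ hdvd)
      have hZb : (p:ℤ)^b ∣ (x.val:ℤ) := by
        obtain ⟨c, hc⟩ := hZdvd
        refine ⟨c, ?_⟩
        have hp0 : (p:ℤ) ≠ 0 := by exact_mod_cast hp.ne_zero
        apply mul_left_cancel₀ hp0
        rw [hc, ← hb, pow_succ]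
        ring
      have hxd : ((p:ZMod (p^s))^b) ∣ x := by
        rw [← hxval]
        exact (zmodB (by omega) _).mpr hZb
      obtain ⟨u, hu⟩ := hxd
      set j := u.val % p with hjdef
      set t := ((u.val / p : ℕ) : ZMod (p^s)) with htdef
      have hj : j < p := Nat.mod_lt _ hp.pos
      have huexp : u = (p:ZMod (p^s)) * t + (j:ZMod (p^s)) := by
        have h0 : u.val = p * (u.val / p) + u.val % p := (Nat.div_add_mod u.val p).symm
        calc u = ((u.val : ℕ) : ZMod (p^s)) := by rw [ZMod.natCast_val, ZMod.cast_id]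
          _ = ((p * (u.val / p) + u.val % p : ℕ) : ZMod (p^s)) := by rw [← h0]
          _ = (p:ZMod (p^s)) * t + (j:ZMod (p^s)) := by rw [htdef, hjdef]; push_cast; ring
      have hxsplit : x = (p:ZMod (p^s))^a * t + (p:ZMod (p^s))^b * (j:ZMod (p^s)) := by
        rw [hu, huexp, ← hb]
        ring
      have hgen1 : ((p:ZMod (p^s))^b * (j:ZMod (p^s)), (1:ZMod p)) ∈ H := by
        have hmem0 : ((p:ZMod (p^s))^a * t, (0:ZMod p)) ∈ H := by
          rw [← mem_Kof, hK, mem_zmul_iff]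
          exact ⟨t, rfl⟩
        have := AddSubgroup.sub_mem H hx hmem0
        have heq : ((x, (1:ZMod p)) - ((p:ZMod (p^s))^a * t, (0:ZMod p)))
            = ((p:ZMod (p^s))^b * (j:ZMod (p^s)), (1:ZMod p)) := by
          rw [Prod.mk_sub_mk, Prod.mk.injEq]
          constructor
          · rw [hxsplit]; ring
          · ring
        rwa [heq] at this
      right; left
      refine ⟨b, by omega, j, hj, ?_⟩
      apply le_antisymm
      · rintro ⟨y, z⟩ hyz
        rw [mem_CgenA]
        have hsub : ((y, z) - (z.val:ℕ) • ((p:ZMod (p^s))^b * (j:ZMod (p^s)), (1:ZMod p))) ∈ H :=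
          AddSubgroup.sub_mem H hyz (AddSubgroup.nsmul_mem H hgen1 _)
        have heq2 : ((y, z) - (z.val:ℕ) • ((p:ZMod (p^s))^b * (j:ZMod (p^s)), (1:ZMod p)))
            = (y - (z.val:ℕ) • ((p:ZMod (p^s))^b * (j:ZMod (p^s))), (0:ZMod p)) := by
          rw [Prod.smul_mk, Prod.mk_sub_mk, Prod.mk.injEq]
          refine ⟨rfl, ?_⟩
          rw [nsmul_eq_mul, mul_one, ZMod.natCast_val, ZMod.cast_id, sub_self]
        rw [heq2] at hsub
        have hw : ((p:ZMod (p^s))^a) ∣ (y - (z.val:ℕ) • ((p:ZMod (p^s))^b * (j:ZMod (p^s)))) := by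
          rw [← mem_zmul_iff, ← hK, mem_Kof]
          exact hsub
        obtain ⟨d, hd⟩ := hw
        refine ⟨(d.val : ℤ), (z.val : ℤ), ?_⟩
        rw [Prod.smul_mk, Prod.smul_mk, Prod.mk_add_mk, Prod.mk.injEq]
        constructor
        · simp only [zsmul_eq_mul, Int.cast_natCast]
          rw [ZMod.natCast_val d, ZMod.cast_id, hb]
          rw [nsmul_eq_mul] at hd
          linear_combination -hd
        · simp only [zsmul_eq_mul, Int.cast_natCast, smul_zero, mul_one, zero_add]
          rw [ZMod.natCast_val z, ZMod.cast_id]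
      · rw [CgenA, AddSubgroup.closure_le]
        intro w hw
        simp only [Set.mem_insert_iff, Set.mem_singleton_iff] at hw
        rcases hw with rfl | rfl
        · show ((p:ZMod (p^s))^(b+1), (0:ZMod p)) ∈ H
          rw [← mem_Kof, hK, mem_zmul_iff, hb]
        · exact hgen1
  · left
    refine ⟨a, ha, ?_⟩
    ext ⟨y, z⟩
    rw [zmA, AddSubgroup.mem_prod]
    constructor
    · intro hyz
      have hz : z = 0 := by
        by_contra hz
        have hzu : IsUnit z := isUnit_iff_ne_zero.mpr hz
        obtain ⟨w, hw⟩ := hzu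
        set c := ((↑(w⁻¹) : ZMod p)).val with hc
        have hmem : (c:ℕ) • ((y, z)) ∈ H := AddSubgroup.nsmul_mem H hyz c
        have heq3 : (c:ℕ) • ((y, z)) = ((c:ℕ) • y, (1:ZMod p)) := by
          rw [Prod.smul_mk, Prod.mk.injEq]
          refine ⟨rfl, ?_⟩
          rw [nsmul_eq_mul, hc, ZMod.natCast_val, ZMod.cast_id, ← hw, ← Units.val_mul,
            inv_mul_cancel w, Units.val_one]
        exact hone ⟨(c:ℕ) • y, heq3 ▸ hmem⟩
      subst hz
      refine ⟨?_, AddSubgroup.mem_bot.mpr rfl⟩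
      show y ∈ zmultiples ((p:ZMod (p^s))^a)
      rw [← hK]
      exact hyz
    · rintro ⟨hy, hz⟩
      rw [AddSubgroup.mem_bot] at hz
      have hy' : y ∈ zmultiples ((p:ZMod (p^s))^a) := hy
      rw [← hK] at hy'
      have : (y, (0:ZMod p)) ∈ H := hy'
      subst hz
      exact this

lemma zmul_one_eq_top {n : ℕ} [NeZero n] : zmultiples ((1 : ZMod n)) = ⊤ := by
  ext x
  simp only [AddSubgroup.mem_top, iff_true, mem_zmul_iff]
  exact one_dvd _

lemma CgenA_ne_top [Fact p.Prime] [NeZero (p^s)] {b j : ℕ} (hb : b + 1 ≤ s) :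
    CgenA p s b j ≠ ⊤ := by
  intro h
  have h1 : Kof (CgenA p s b j) = zmultiples ((p:ZMod (p^s))^(b+1)) := Kof_CgenA hb
  rw [h, Kof_top] at h1
  have h2 : zmultiples ((p:ZMod (p^s))^0) = zmultiples ((p:ZMod (p^s))^(b+1)) := by
    rw [pow_zero, zmul_one_eq_top, h1]
  exact absurd (zm_inj (Nat.zero_le s) hb h2) (by omega)

lemma zmA_ne_top [Fact p.Prime] {a : ℕ} : zmA p s a ≠ ⊤ := by
  intro h
  exact zmA_no_one (0 : ZMod (p^s)) (h ▸ AddSubgroup.mem_top _)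

noncomputable def Findex (p s : ℕ) := Fin (s+1) ⊕ Fin s × Fin p

noncomputable def Fmap (p s : ℕ) : Findex p s → AddSubgroup (ZMod (p^s) × ZMod p) :=
  fun i => match i with
  | Sum.inl a => zmA p s a
  | Sum.inr (b, j) => CgenA p s b j

lemma Fmap_ne_top [Fact p.Prime] [NeZero (p^s)] (i : Findex p s) : Fmap p s i ≠ ⊤ := by
  match i with
  | Sum.inl a => exact zmA_ne_top
  | Sum.inr (b, j) => exact CgenA_ne_top (by omega)

lemma Fmap_inj [Fact p.Prime] [NeZero (p^s)] : Function.Injective (Fmap p s) := by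
  rintro (a | ⟨b, j⟩) (a' | ⟨b', j'⟩) h
  · have h : zmA p s (a:ℕ) = zmA p s (a':ℕ) := h
    have h1 : zmultiples ((p:ZMod (p^s))^(a:ℕ)) = zmultiples ((p:ZMod (p^s))^(a':ℕ)) := by
      rw [← Kof_zmA (a:ℕ), ← Kof_zmA (a':ℕ), h]
    have := zm_inj (by omega) (by omega) h1
    obtain rfl : a = a' := Fin.ext this
    rfl
  · exfalso
    have h : zmA p s (a:ℕ) = CgenA p s (b':ℕ) (j':ℕ) := h
    exact zmA_no_one _ (h ▸ mem_snd_CgenA)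
  · exfalso
    have h : CgenA p s (b:ℕ) (j:ℕ) = zmA p s (a':ℕ) := h
    exact zmA_no_one _ (h.symm ▸ mem_snd_CgenA)
  · have h : CgenA p s (b:ℕ) (j:ℕ) = CgenA p s (b':ℕ) (j':ℕ) := h
    have h1 : zmultiples ((p:ZMod (p^s))^((b:ℕ)+1)) = zmultiples ((p:ZMod (p^s))^((b':ℕ)+1)) := by
      rw [← Kof_CgenA (b := (b:ℕ)) (j := (j:ℕ)) (by omega),
        ← Kof_CgenA (b := (b':ℕ)) (j := (j':ℕ)) (by omega), h]
    have hbb : (b:ℕ) = (b':ℕ) := by have := zm_inj (by omega) (by omega) h1; omega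
    have hjj : (j:ℕ) = (j':ℕ) := by
      have h2 := h
      rw [hbb] at h2
      exact CgenA_j_inj (by omega) j.isLt j'.isLt h2
    obtain rfl : b = b' := Fin.ext hbb
    obtain rfl : j = j' := Fin.ext hjj
    rfl

lemma Fmap_surj [Fact p.Prime] [NeZero (p^s)] (hs : 1 ≤ s)
    (H : AddSubgroup (ZMod (p^s) × ZMod p)) (hH : H ≠ ⊤) :
    ∃ i, Fmap p s i = H := by
  rcases classify hs H with ⟨a, ha, rfl⟩ | ⟨b, hb, j, hj, rfl⟩ | h
  · exact ⟨Sum.inl ⟨a, by omega⟩, rfl⟩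
  · exact ⟨Sum.inr (⟨b, by omega⟩, ⟨j, hj⟩), rfl⟩
  · exact absurd h hH

lemma card_ne_top [Fact p.Prime] [NeZero (p^s)] (hs : 1 ≤ s) :
    Nat.card {K : AddSubgroup (ZMod (p^s) × ZMod p) // K ≠ ⊤} = s * (p + 1) + 1 := by
  have e : Findex p s ≃ {K : AddSubgroup (ZMod (p^s) × ZMod p) // K ≠ ⊤} := by
    apply Equiv.ofBijective (fun i => ⟨Fmap p s i, Fmap_ne_top i⟩)
    constructor
    · intro i i' hii
      exact Fmap_inj (congrArg Subtype.val hii)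
    · rintro ⟨H, hH⟩
      obtain ⟨i, hi⟩ := Fmap_surj hs H hH
      exact ⟨i, Subtype.ext hi⟩
  rw [← Nat.card_congr e]
  rw [Findex]
  rw [Nat.card_sum]
  simp only [Nat.card_eq_fintype_card, Fintype.card_fin, Fintype.card_prod]
  ring


lemma CD_comm_eq {G : Type*} [CommGroup G] [Finite G] : CD G = {(⊤ : Subgroup G)} := by
  have hm : ∀ H : Subgroup G, mCD H = Nat.card H * Nat.card G := by
    intro H
    have hc : Subgroup.centralizer ((H : Set G)) = ⊤ :=
      Subgroup.centralizer_eq_top_iff_subset.mpr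
        (fun x _ => by rw [CommGroup.center_eq_top]; trivial)
    rw [mCD, hc, Subgroup.card_top]
  have hbdd : ∀ x ∈ Set.range fun H : Subgroup G => mCD H, x ≤ Nat.card G * Nat.card G := by
    rintro _ ⟨H, rfl⟩
    show mCD H ≤ Nat.card G * Nat.card G
    rw [hm H]
    exact Nat.mul_le_mul_right _ (Subgroup.card_le_card_group H)
  have hms : mStar G = Nat.card G * Nat.card G := by
    apply le_antisymm
    · exact csSup_le (Set.range_nonempty _) hbdd
    · have htop : mCD (⊤ : Subgroup G) = Nat.card G * Nat.card G := by
        rw [hm, Subgroup.card_top]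
      rw [← htop]
      exact le_csSup ⟨Nat.card G * Nat.card G, hbdd⟩ ⟨⊤, rfl⟩
  ext H
  simp only [CD, Set.mem_setOf_eq, Set.mem_singleton_iff, hm H, hms]
  constructor
  · intro h
    have hpos : 0 < Nat.card G := Nat.card_pos
    have : Nat.card H = Nat.card G := Nat.eq_of_mul_eq_mul_right hpos h
    exact Subgroup.eq_top_of_card_eq H this
  · rintro rfl
    rw [Subgroup.card_top]

theorem stmt7 {p s : ℕ} [Fact p.Prime] (hs : 1 ≤ s) :
    deltaCD (Multiplicative (ZMod (p ^ s) × ZMod p)) = s * (p + 1) + 1 := by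
  have hp : p.Prime := Fact.out
  haveI : NeZero p := ⟨hp.ne_zero⟩
  haveI : NeZero (p^s) := ⟨pow_ne_zero s hp.ne_zero⟩
  set G := Multiplicative (ZMod (p ^ s) × ZMod p)
  rw [deltaCD]
  have hCD : CD G = {(⊤ : Subgroup G)} := CD_comm_eq
  have e1 : {H : Subgroup G // H ∉ CD G} ≃ {H : Subgroup G // H ≠ ⊤} :=
    Equiv.subtypeEquiv (Equiv.refl _) (fun H => by rw [hCD]; simp)
  have e2 : {K : AddSubgroup (ZMod (p^s) × ZMod p) // K ≠ ⊤} ≃ {H : Subgroup G // H ≠ ⊤} :=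
    Equiv.subtypeEquiv AddSubgroup.toSubgroup.toEquiv (fun K => by
      have hcoe : ∀ L : AddSubgroup (ZMod (p^s) × ZMod p),
          AddSubgroup.toSubgroup.toEquiv L = AddSubgroup.toSubgroup L := fun _ => rfl
      rw [hcoe, not_iff_not]
      constructor
      · rintro rfl
        exact OrderIso.map_top _
      · intro h
        have h2 := congrArg AddSubgroup.toSubgroup.symm h
        rwa [OrderIso.symm_apply_apply, OrderIso.map_top] at h2)
  rw [Nat.card_congr e1, ← Nat.card_congr e2]
  exact card_ne_top hs
end

section
/- Let G be a metacyclic p-group with p an odd prime. Then the Chermak-Delgado lattice CD(G) equals the interval [G/Z(G)] = {H : Z(G) ≤ H ≤ G}. -/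
/-!
Write `G = ⟨a⟩⟨b⟩` with `⟨a⟩` normal and `b a b⁻¹ = a ^ e`; if `a` and `b` commute, `G` is abelian
and there is nothing to prove. Otherwise `p ∣ e - 1`, and as `p` is odd, lifting the exponent gives
`v_p(e ^ j - 1) = v_p(e - 1) + v_p(j)`, so `a ^ X` commutes with `b ^ j` exactly when
`v_p(X) + v_p(j) ≥ c`, where `p ^ c` is the order of `e` modulo `|a|`.
A subgroup `H ≥ Z(G)` meets `⟨a⟩` in `⟨a ^ p ^ α⟩` and has image `⟨b ^ p ^ β⟩` in `G / ⟨a⟩`,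
with `α, β ≤ c`; its centralizer then meets `⟨a⟩` in `⟨a ^ p ^ (c - β)⟩` and has image
`⟨b ^ p ^ (c - α)⟩`. Hence `|H| |C(H)|` is the same for all `H ≥ Z(G)`; since
`|K| |C(K)| ≤ |K Z(G)| |C(K Z(G))|` for every `K`, these are exactly the subgroups of maximal
measure.
-/

open Subgroup

section CyclicSubgroups

variable {G : Type*} [Group G] {p : ℕ}

theorem zpow_mem_zpowers_zpow_iff {g : G} {X Y : ℤ} :
    g ^ X ∈ zpowers (g ^ Y) ↔ (Y.gcd (orderOf g) : ℤ) ∣ X := by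
  constructor
  · rintro ⟨s, hs⟩
    have hmod : (orderOf g : ℤ) ∣ X - Y * s :=
      (zpow_eq_zpow_iff_modEq.mp (by simpa [← zpow_mul] using hs)).dvd
    simpa using dvd_add ((Int.gcd_dvd_right Y _).trans hmod) ((Int.gcd_dvd_left Y _).mul_right s)
  · rintro ⟨w, rfl⟩
    refine ⟨Y.gcdA (orderOf g) * w, ?_⟩
    have hord : g ^ ((orderOf g : ℤ) * (Y.gcdB (orderOf g) * w)) = 1 := by
      rw [zpow_mul, zpow_natCast, pow_orderOf_eq_one, one_zpow]
    simp only
    rw [Int.gcd_eq_gcd_ab, add_mul, zpow_add, mul_assoc _ (Y.gcdB _), hord, mul_one,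
      ← zpow_mul, mul_assoc]

theorem zpow_mem_zpowers_pow_prime_pow_iff {g : G} {m k : ℕ} (hg : orderOf g = p ^ m)
    (hk : k ≤ m) {X : ℤ} : g ^ X ∈ zpowers (g ^ p ^ k) ↔ (p : ℤ) ^ k ∣ X := by
  rw [← zpow_natCast, zpow_mem_zpowers_zpow_iff, hg, Nat.cast_pow, ← Nat.cast_pow,
    Int.gcd_natCast_natCast, Nat.gcd_eq_left (pow_dvd_pow p hk), Nat.cast_pow]

theorem le_of_pow_prime_pow_mem_zpowers (hp : p.Prime) {g : G} {m k l : ℕ}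
    (hg : orderOf g = p ^ m) (hk : k ≤ m) (h : g ^ p ^ l ∈ zpowers (g ^ p ^ k)) : k ≤ l := by
  rw [← zpow_natCast g (p ^ l), zpow_mem_zpowers_pow_prime_pow_iff hg hk, ← Nat.cast_pow,
    Int.natCast_dvd_natCast] at h
  exact (Nat.pow_dvd_pow_iff_le_right hp.one_lt).mp h

theorem zpow_mem_zpowers_zpow_of_emultiplicity_le (hp : p.Prime) {g : G} {m : ℕ}
    (hg : orderOf g = p ^ m) {X Y : ℤ}
    (h : emultiplicity (p : ℤ) Y ≤ emultiplicity (p : ℤ) X) :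
    g ^ X ∈ zpowers (g ^ Y) := by
  rw [zpow_mem_zpowers_zpow_iff, hg]
  obtain ⟨j, -, hj⟩ : ∃ j ≤ m, Y.gcd ((p ^ m : ℕ) : ℤ) = p ^ j :=
    (Nat.dvd_prime_pow hp).mp (Int.gcd_dvd_natAbs_right Y _)
  have hjY : (p : ℤ) ^ j ∣ Y := by exact_mod_cast hj ▸ Int.gcd_dvd_left Y ((p ^ m : ℕ) : ℤ)
  rw [hj, Nat.cast_pow, pow_dvd_iff_le_emultiplicity]
  exact (pow_dvd_iff_le_emultiplicity.mp hjY).trans h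

theorem card_zpowers_pow_prime_pow (hp : p ≠ 0) {g : G} {m k : ℕ} (hg : orderOf g = p ^ m)
    (hk : k ≤ m) : Nat.card (zpowers (g ^ p ^ k)) = p ^ (m - k) := by
  rw [Nat.card_zpowers, orderOf_pow_of_dvd (pow_ne_zero k hp) (hg ▸ pow_dvd_pow p hk), hg,
    Nat.pow_div hk (Nat.pos_of_ne_zero hp)]

theorem exists_eq_zpowers_pow_prime_pow (hp : p.Prime) {g : G} {m : ℕ}
    (hg : orderOf g = p ^ m) {S : Subgroup G} (hS : S ≤ zpowers g) :
    ∃ k ≤ m, S = zpowers (g ^ p ^ k) := by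
  classical
  have hm : g ^ p ^ m ∈ S := by rw [← hg, pow_orderOf_eq_one]; exact S.one_mem
  have hex : ∃ k, g ^ p ^ k ∈ S := ⟨m, hm⟩
  refine ⟨Nat.find hex, Nat.find_min' hex hm,
    le_antisymm (fun y hy => ?_) (zpowers_le.mpr (Nat.find_spec hex))⟩
  obtain ⟨X, rfl⟩ := mem_zpowers_iff.mp (hS hy)
  obtain ⟨j, -, hj⟩ : ∃ j ≤ m, X.gcd ((p ^ m : ℕ) : ℤ) = p ^ j :=
    (Nat.dvd_prime_pow hp).mp (Int.gcd_dvd_natAbs_right X _)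
  have hjS : g ^ p ^ j ∈ S := by
    refine zpowers_le.mpr hy ?_
    rw [← zpow_natCast, zpow_mem_zpowers_zpow_iff, hg, hj]
  have hjX : (p : ℤ) ^ j ∣ X := by exact_mod_cast hj ▸ Int.gcd_dvd_left X ((p ^ m : ℕ) : ℤ)
  rw [zpow_mem_zpowers_pow_prime_pow_iff hg (Nat.find_min' hex hm)]
  exact (pow_dvd_pow _ (Nat.find_min' hex hjS)).trans hjX

end CyclicSubgroups

section Generation

variable {G G' : Type*} [Group G] [Group G']

theorem Subgroup.card_eq_card_inf_ker_mul_card_map (f : G →* G') (K : Subgroup G) :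
    Nat.card K = Nat.card (f.ker ⊓ K : Subgroup G) * Nat.card (K.map f) := by
  rw [← relIndex_ker, ← inf_relIndex_right, ← relIndex_bot_left, ← relIndex_bot_left,
    relIndex_mul_relIndex _ _ _ bot_le inf_le_right]

theorem Subgroup.eq_closure_pair_of_inf_ker_eq_zpowers (f : G →* G') {K : Subgroup G} {u h : G}
    (hh : h ∈ K) (hu : f.ker ⊓ K = zpowers u) (hK : K.map f = zpowers (f h)) :
    K = closure {u, h} := by
  have huK : u ∈ K := (hu.ge (mem_zpowers u)).2
  refine le_antisymm (fun g hg => ?_) ((closure_le K).mpr (Set.insert_subset huK (by simpa)))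
  obtain ⟨k, hk⟩ := mem_zpowers_iff.mp (hK ▸ mem_map_of_mem f hg)
  have hker : g * (h ^ k)⁻¹ ∈ f.ker ⊓ K :=
    mem_inf.mpr ⟨by simp [← hk], K.mul_mem hg (K.inv_mem (K.zpow_mem hh k))⟩
  obtain ⟨l, hl⟩ := mem_zpowers_iff.mp (hu ▸ hker)
  rw [show g = u ^ l * h ^ k by rw [hl]; group]
  exact mul_mem (zpow_mem (subset_closure (by simp)) l) (zpow_mem (subset_closure (by simp)) k)

theorem Subgroup.mem_centralizer_closure_pair {u h x : G} :
    x ∈ centralizer (closure {u, h} : Set G) ↔ Commute u x ∧ Commute h x := by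
  rw [centralizer_closure, mem_centralizer_iff, Set.forall_mem_insert]
  simp only [Set.mem_singleton_iff, forall_eq]
  rfl

theorem QuotientGroup.pow_orderOf_mk_mem {N : Subgroup G} [N.Normal] (b : G) :
    b ^ orderOf (b : G ⧸ N) ∈ N :=
  (QuotientGroup.eq_one_iff _).mp (by rw [QuotientGroup.mk_pow, pow_orderOf_eq_one])

theorem QuotientGroup.mk_zpow_mul_pow {a b : G} [(zpowers a).Normal] (X : ℤ) (j : ℕ) :
    ((a ^ X * b ^ j : G) : G ⧸ zpowers a) = (b : G ⧸ zpowers a) ^ j := by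
  rw [QuotientGroup.mk_mul, QuotientGroup.mk_zpow, QuotientGroup.mk_pow,
    (QuotientGroup.eq_one_iff a).mpr (mem_zpowers a), one_zpow, one_mul]

theorem closure_pair_eq_top_of_zpowers_mk_eq_top {a b : G} [(zpowers a).Normal]
    (hb : zpowers (b : G ⧸ zpowers a) = ⊤) : closure {a, b} = ⊤ := by
  refine (eq_closure_pair_of_inf_ker_eq_zpowers (QuotientGroup.mk' (zpowers a)) (mem_top b)
    (by rw [QuotientGroup.ker_mk', inf_top_eq]) ?_).symm
  rw [map_top_of_surjective _ (QuotientGroup.mk'_surjective _)]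
  exact hb.symm

theorem mem_center_iff_of_closure_pair_eq_top {a b x : G} (h : closure {a, b} = ⊤) :
    x ∈ center G ↔ Commute a x ∧ Commute b x := by
  rw [← centralizer_univ, ← coe_top, ← h, mem_centralizer_closure_pair]

theorem center_eq_top_of_commute {a b : G} (h : closure {a, b} = ⊤) (hab : Commute a b) :
    center G = ⊤ := by
  rw [eq_top_iff, ← h, closure_le, Set.insert_subset_iff, Set.singleton_subset_iff,
    SetLike.mem_coe, SetLike.mem_coe, mem_center_iff_of_closure_pair_eq_top h,
    mem_center_iff_of_closure_pair_eq_top h]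
  exact ⟨⟨Commute.refl a, hab.symm⟩, hab, Commute.refl b⟩

end Generation

section ChermakDelgado

variable {G : Type*} [Group G]

theorem centralizer_sup_center (K : Subgroup G) :
    centralizer ((K ⊔ center G : Subgroup G) : Set G) = centralizer (K : Set G) := by
  refine le_antisymm (centralizer_le (SetLike.coe_subset_coe.mpr le_sup_left))
    (le_centralizer_iff.mp ?_)
  exact sup_le (le_centralizer_iff.mp le_rfl) (center_le_centralizer _)

theorem CD_eq_setOf_center_le [Finite G] {V : ℕ}
    (hV : ∀ H : Subgroup G, center G ≤ H → mCD H = V) :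
    CD G = {H : Subgroup G | center G ≤ H} := by
  have hle : ∀ K : Subgroup G, mCD K ≤ V := fun K =>
    calc mCD K = Nat.card K * Nat.card (centralizer ((K ⊔ center G : Subgroup G) : Set G)) := by
          rw [mCD, centralizer_sup_center]
      _ ≤ mCD (K ⊔ center G) := by
          rw [mCD]; exact Nat.mul_le_mul_right _ (card_le_of_le le_sup_left)
      _ = V := hV _ le_sup_right
  have hstar : mStar G = V := by
    refine le_antisymm (csSup_le (Set.range_nonempty _) ?_) (le_csSup ⟨V, ?_⟩ ⟨⊤, hV ⊤ le_top⟩)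
    all_goals rintro _ ⟨K, rfl⟩; exact hle K
  ext H
  change mCD H = mStar G ↔ center G ≤ H
  rw [hstar]
  refine ⟨fun hH => ?_, hV H⟩
  have hsup : mCD (H ⊔ center G) = mCD H := (hV _ le_sup_right).trans hH.symm
  rw [mCD, mCD, centralizer_sup_center] at hsup
  have hcard : Nat.card (H ⊔ center G : Subgroup G) = Nat.card H :=
    Nat.eq_of_mul_eq_mul_right Nat.card_pos hsup
  exact le_sup_right.trans (Subgroup.eq_of_le_of_card_ge le_sup_left hcard.le).ge

end ChermakDelgado

section Conjugation

variable {G : Type*} [Group G] {a b : G} {e : ℤ}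

theorem pow_mul_zpow_of_conj_eq (hconj : b * a * b⁻¹ = a ^ e) (j : ℕ) (X : ℤ) :
    b ^ j * a ^ X = a ^ (X * e ^ j) * b ^ j := by
  have hconj_pow : b ^ j * a * (b ^ j)⁻¹ = a ^ e ^ j := by
    induction j with
    | zero => simp
    | succ j ih =>
      calc b ^ (j + 1) * a * (b ^ (j + 1))⁻¹ = b * (b ^ j * a * (b ^ j)⁻¹) * b⁻¹ := by group
        _ = (b * a * b⁻¹) ^ e ^ j := by rw [conj_zpow, ih]
        _ = a ^ e ^ (j + 1) := by rw [hconj, ← zpow_mul, pow_succ']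
  rw [← mul_inv_eq_iff_eq_mul, ← conj_zpow, hconj_pow, ← zpow_mul, mul_comm]

theorem commute_zpow_pow_iff_of_conj_eq (hconj : b * a * b⁻¹ = a ^ e) {X : ℤ} {j : ℕ} :
    Commute (a ^ X) (b ^ j) ↔ (orderOf a : ℤ) ∣ X * (e ^ j - 1) := by
  rw [commute_iff_eq, pow_mul_zpow_of_conj_eq hconj, mul_left_inj, zpow_eq_zpow_iff_modEq,
    Int.modEq_iff_dvd, mul_sub, mul_one]

theorem mul_pow_eq_of_conj_eq (hconj : b * a * b⁻¹ = a ^ e) (t : ℤ) (r k : ℕ) :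
    (a ^ t * b ^ r) ^ k = a ^ (t * ∑ l ∈ Finset.range k, (e ^ r) ^ l) * b ^ (r * k) := by
  induction k with
  | zero => simp
  | succ k ih =>
    rw [pow_succ, ih, mul_assoc, ← mul_assoc (b ^ (r * k)), pow_mul_zpow_of_conj_eq hconj,
      mul_assoc, ← pow_add, ← mul_assoc, ← zpow_add, Finset.sum_range_succ, ← pow_mul, mul_add,
      mul_add_one]

theorem commute_zpow_mul_pow_iff_of_conj_eq (hconj : b * a * b⁻¹ = a ^ e) {i t : ℤ} {s r : ℕ} :
    Commute (a ^ i * b ^ s) (a ^ t * b ^ r) ↔ a ^ (t * (e ^ s - 1)) = a ^ (i * (e ^ r - 1)) := by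
  have hmul : ∀ (i t : ℤ) (s r : ℕ), (a ^ i * b ^ s) * (a ^ t * b ^ r) =
      a ^ (i + t * e ^ s) * b ^ (s + r) := fun i t s r => by
    rw [mul_assoc, ← mul_assoc (b ^ s), pow_mul_zpow_of_conj_eq hconj, zpow_add, pow_add]
    group
  rw [commute_iff_eq, hmul, hmul, add_comm s, mul_left_inj, zpow_eq_zpow_iff_modEq,
    zpow_eq_zpow_iff_modEq, Int.modEq_iff_dvd, Int.modEq_iff_dvd]
  constructor <;> intro h <;> convert h using 1 <;> ring

end Conjugation

theorem Int.emultiplicity_pow_sub_one {p : ℕ} (hp : p.Prime) (hodd : Odd p) {e : ℤ}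
    (hpe : (p : ℤ) ∣ e - 1) (j : ℕ) :
    emultiplicity (p : ℤ) (e ^ j - 1) =
      emultiplicity (p : ℤ) (e - 1) + emultiplicity (p : ℤ) (j : ℤ) := by
  have hpe' : ¬(p : ℤ) ∣ e := fun h => hp.one_lt.ne' (Nat.dvd_one.mp
    (Int.natCast_dvd_natCast.mp (by simpa using Int.dvd_sub h hpe)))
  simpa [Int.natCast_emultiplicity] using
    Int.emultiplicity_pow_sub_pow hp hodd (y := 1) (by simpa using hpe) hpe' j

theorem Int.dvd_sub_one_of_dvd_pow_prime_pow_sub_one {p : ℕ} [Fact p.Prime] {e : ℤ} {n : ℕ}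
    (h : (p : ℤ) ∣ e ^ p ^ n - 1) : (p : ℤ) ∣ e - 1 := by
  rw [← ZMod.intCast_zmod_eq_zero_iff_dvd] at h ⊢
  push_cast at h ⊢
  rwa [ZMod.pow_card_pow] at h

theorem Int.emultiplicity_natCast_prime_pow {p : ℕ} (hp : p.Prime) (k : ℕ) :
    emultiplicity (p : ℤ) ((p ^ k : ℕ) : ℤ) = k := by
  rw [Nat.cast_pow, emultiplicity_pow_self_of_prime (Nat.prime_iff_prime_int.mp hp)]

/-- `G = ⟨a⟩⟨b⟩` with `b a b⁻¹ = a ^ e`, where `p ^ v` exactly divides `e - 1`; the order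
`p ^ (v + c)` of `a` is split so that `p ^ c` is the order of `e` modulo `|a|`. -/
structure MetacyclicPresentation (p : ℕ) {G : Type*} [Group G] (a b : G) [(zpowers a).Normal]
    (e : ℤ) (v c n : ℕ) : Prop where
  conj_eq : b * a * b⁻¹ = a ^ e
  dvd_sub_one : (p : ℤ) ∣ e - 1
  emultiplicity_sub_one : emultiplicity (p : ℤ) (e - 1) = v
  orderOf_eq : orderOf a = p ^ (v + c)
  orderOf_mk_eq : orderOf (b : G ⧸ zpowers a) = p ^ n
  zpowers_mk_eq_top : zpowers (b : G ⧸ zpowers a) = ⊤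

theorem exists_metacyclicPresentation {G : Type*} [Group G] {p : ℕ} [Fact p.Prime]
    (hG : IsPGroup p G) {a b : G} [hN : (zpowers a).Normal]
    (hb : zpowers (b : G ⧸ zpowers a) = ⊤) (hab : ¬Commute a b) :
    ∃ e : ℤ, ∃ v c n : ℕ, MetacyclicPresentation p a b e v c n := by
  have hp : p.Prime := Fact.out
  obtain ⟨e, he⟩ := mem_zpowers_iff.mp (hN.conj_mem a (mem_zpowers a) b)
  obtain ⟨m, hm⟩ := IsPGroup.iff_orderOf.mp hG a
  obtain ⟨n, hn⟩ := IsPGroup.iff_orderOf.mp (hG.to_quotient (zpowers a)) (b : G ⧸ zpowers a)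
  have hcomm_iff := fun j : ℕ => commute_zpow_pow_iff_of_conj_eq he.symm (X := 1) (j := j)
  simp only [zpow_one, one_mul, hm, Nat.cast_pow] at hcomm_iff
  have hnot : ¬(p : ℤ) ^ m ∣ e - 1 := fun h => hab (by simpa using (hcomm_iff 1).mpr (by simpa))
  have hdvd : (p : ℤ) ^ m ∣ e ^ p ^ n - 1 := by
    obtain ⟨X, hX⟩ := mem_zpowers_iff.mp (hn ▸ QuotientGroup.pow_orderOf_mk_mem (N := zpowers a) b)
    exact (hcomm_iff _).mp (hX ▸ (Commute.refl a).zpow_right X)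
  have hm0 : m ≠ 0 := by rintro rfl; exact hnot (by simp)
  have hfin : FiniteMultiplicity (p : ℤ) (e - 1) :=
    Int.finiteMultiplicity_iff.mpr ⟨by simp [hp.one_lt.ne'], fun h => hnot (by simp [h])⟩
  have hvm : multiplicity (p : ℤ) (e - 1) < m :=
    lt_of_not_ge fun h => hnot ((pow_dvd_pow _ h).trans (pow_multiplicity_dvd _ _))
  refine ⟨e, multiplicity (p : ℤ) (e - 1), m - multiplicity (p : ℤ) (e - 1), n,
    ⟨he.symm, ?_, hfin.emultiplicity_eq_multiplicity, by rw [hm]; congr 1; omega, hn, hb⟩⟩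
  exact Int.dvd_sub_one_of_dvd_pow_prime_pow_sub_one ((dvd_pow_self _ hm0).trans hdvd)

namespace MetacyclicPresentation

variable {G : Type*} [Group G] {p : ℕ} [Fact p.Prime] {a b : G} [(zpowers a).Normal]
  {e : ℤ} {v c n : ℕ}

theorem commute_zpow_pow_iff (P : MetacyclicPresentation p a b e v c n) (hodd : Odd p)
    {X : ℤ} {j : ℕ} :
    Commute (a ^ X) (b ^ j) ↔
      (c : ℕ∞) ≤ emultiplicity (p : ℤ) X + emultiplicity (p : ℤ) (j : ℤ) := by
  have hp : Prime (p : ℤ) := Nat.prime_iff_prime_int.mp Fact.out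
  rw [commute_zpow_pow_iff_of_conj_eq P.conj_eq, P.orderOf_eq, Nat.cast_pow,
    pow_dvd_iff_le_emultiplicity, emultiplicity_mul hp,
    Int.emultiplicity_pow_sub_one Fact.out hodd P.dvd_sub_one, P.emultiplicity_sub_one,
    Nat.cast_add, add_left_comm, ENat.add_le_add_iff_left (ENat.natCast_ne_top v)]

theorem commute_pow_prime_pow (P : MetacyclicPresentation p a b e v c n) (hodd : Odd p)
    {k l : ℕ} (h : c ≤ k + l) : Commute (a ^ p ^ k) (b ^ p ^ l) := by
  rw [← zpow_natCast, P.commute_zpow_pow_iff hodd, Int.emultiplicity_natCast_prime_pow Fact.out,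
    Int.emultiplicity_natCast_prime_pow Fact.out]
  exact_mod_cast h

theorem pow_prime_pow_mem_center_left (P : MetacyclicPresentation p a b e v c n) (hodd : Odd p) :
    a ^ p ^ c ∈ center G := by
  rw [mem_center_iff_of_closure_pair_eq_top
    (closure_pair_eq_top_of_zpowers_mk_eq_top P.zpowers_mk_eq_top)]
  exact ⟨(Commute.refl a).pow_right _,
    by simpa using (P.commute_pow_prime_pow hodd (k := c) (l := 0) le_self_add).symm⟩

theorem pow_prime_pow_mem_center_right (P : MetacyclicPresentation p a b e v c n) (hodd : Odd p) :
    b ^ p ^ c ∈ center G := by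
  rw [mem_center_iff_of_closure_pair_eq_top
    (closure_pair_eq_top_of_zpowers_mk_eq_top P.zpowers_mk_eq_top)]
  exact ⟨by simpa using P.commute_pow_prime_pow hodd (k := 0) (l := c) le_add_self,
    (Commute.refl b).pow_right _⟩

theorem c_le_n (P : MetacyclicPresentation p a b e v c n) (hodd : Odd p) : c ≤ n := by
  obtain ⟨X, hX⟩ := mem_zpowers_iff.mp
    (P.orderOf_mk_eq ▸ QuotientGroup.pow_orderOf_mk_mem (N := zpowers a) b)
  have hcomm : Commute (a ^ ((p ^ 0 : ℕ) : ℤ)) (b ^ p ^ n) := by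
    rw [← hX, pow_zero, Nat.cast_one, zpow_one]
    exact (Commute.refl a).zpow_right X
  rw [P.commute_zpow_pow_iff hodd, Int.emultiplicity_natCast_prime_pow Fact.out,
    Int.emultiplicity_natCast_prime_pow Fact.out] at hcomm
  exact_mod_cast hcomm.trans_eq (zero_add _)

theorem exists_invariants_of_center_le (P : MetacyclicPresentation p a b e v c n) (hodd : Odd p)
    {H : Subgroup G} (hZH : center G ≤ H) :
    ∃ α β : ℕ, ∃ t : ℤ, α ≤ c ∧ β ≤ c ∧ zpowers a ⊓ H = zpowers (a ^ p ^ α) ∧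
      H.map (QuotientGroup.mk' (zpowers a)) = zpowers ((b : G ⧸ zpowers a) ^ p ^ β) ∧
      a ^ t * b ^ p ^ β ∈ H := by
  have hp : p.Prime := Fact.out
  obtain ⟨α, hαm, hα⟩ := exists_eq_zpowers_pow_prime_pow hp P.orderOf_eq
    (inf_le_left : zpowers a ⊓ H ≤ zpowers a)
  obtain ⟨β, hβn, hβ⟩ := exists_eq_zpowers_pow_prime_pow hp P.orderOf_mk_eq
    (S := H.map (QuotientGroup.mk' (zpowers a))) (P.zpowers_mk_eq_top ▸ le_top)
  have hαc : α ≤ c := le_of_pow_prime_pow_mem_zpowers hp P.orderOf_eq hαm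
    (hα ▸ mem_inf.mpr ⟨pow_mem (mem_zpowers a) _, hZH (P.pow_prime_pow_mem_center_left hodd)⟩)
  have hβc : β ≤ c := le_of_pow_prime_pow_mem_zpowers hp P.orderOf_mk_eq hβn
    (hβ ▸ mem_map_of_mem _ (hZH (P.pow_prime_pow_mem_center_right hodd)))
  obtain ⟨g, hgH, hg⟩ := hβ.ge (mem_zpowers _)
  rw [QuotientGroup.mk'_apply] at hg
  obtain ⟨t, ht⟩ := mem_zpowers_iff.mp ((QuotientGroup.eq_one_iff (N := zpowers a)
    (g * (b ^ p ^ β)⁻¹)).mp (by simp [hg]))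
  exact ⟨α, β, t, hαc, hβc, hα, hβ, by rwa [ht, inv_mul_cancel_right]⟩

theorem inf_centralizer_eq (P : MetacyclicPresentation p a b e v c n) (hodd : Odd p)
    {α β : ℕ} {t : ℤ} (hβc : β ≤ c) :
    zpowers a ⊓ centralizer (closure {a ^ p ^ α, a ^ t * b ^ p ^ β} : Set G) =
      zpowers (a ^ p ^ (c - β)) := by
  refine le_antisymm (fun x hx => ?_) (zpowers_le.mpr (mem_inf.mpr ⟨pow_mem (mem_zpowers a) _,
    mem_centralizer_closure_pair.mpr ⟨(Commute.refl a).pow_pow _ _, ?_⟩⟩))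
  · obtain ⟨X, rfl⟩ := mem_zpowers_iff.mp (mem_inf.mp hx).1
    have hcomm : Commute (a ^ X) (b ^ p ^ β) := by
      have h := (mem_centralizer_closure_pair.mp (mem_inf.mp hx).2).2
      simpa using (((Commute.refl a).zpow_zpow t X).inv_left.mul_left h).symm
    rw [P.commute_zpow_pow_iff hodd, Int.emultiplicity_natCast_prime_pow Fact.out] at hcomm
    rw [zpow_mem_zpowers_pow_prime_pow_iff P.orderOf_eq (by omega), pow_dvd_iff_le_emultiplicity,
      ENat.natCast_sub, tsub_le_iff_right]
    exact hcomm
  · exact ((Commute.refl a).zpow_left t |>.pow_right _).mul_left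
      (P.commute_pow_prime_pow hodd (by omega : c ≤ c - β + β)).symm

/-- This is where `Z(G) ≤ H` enters: `(a ^ t * b ^ p ^ β) ^ p ^ (c - β) = a ^ (t σ) * b ^ p ^ c`
with `b ^ p ^ c` central, so `a ^ (t σ) ∈ H`, and `v_p(σ) = c - β` by lifting the exponent. -/
theorem le_emultiplicity_of_center_le (P : MetacyclicPresentation p a b e v c n) (hodd : Odd p)
    {H : Subgroup G} (hZH : center G ≤ H) {α β : ℕ} {t : ℤ} (hαc : α ≤ c) (hβc : β ≤ c)
    (hα : zpowers a ⊓ H = zpowers (a ^ p ^ α)) (ht : a ^ t * b ^ p ^ β ∈ H) :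
    (α : ℕ∞) ≤ emultiplicity (p : ℤ) t + (c - β : ℕ) := by
  have hp : p.Prime := Fact.out
  have hpZ : Prime (p : ℤ) := Nat.prime_iff_prime_int.mp hp
  set σ := ∑ l ∈ Finset.range (p ^ (c - β)), (e ^ p ^ β) ^ l with hσ
  have hpow := mul_pow_eq_of_conj_eq P.conj_eq t (p ^ β) (p ^ (c - β))
  rw [← pow_add, Nat.add_sub_cancel' hβc, ← hσ] at hpow
  have hmem : a ^ (t * σ) ∈ zpowers (a ^ p ^ α) := by
    refine hα ▸ mem_inf.mpr ⟨zpow_mem (mem_zpowers a) _, ?_⟩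
    rw [show a ^ (t * σ) = (a ^ t * b ^ p ^ β) ^ p ^ (c - β) * (b ^ p ^ c)⁻¹ by rw [hpow]; group]
    exact mul_mem (pow_mem ht _) (inv_mem (hZH (P.pow_prime_pow_mem_center_right hodd)))
  rw [zpow_mem_zpowers_pow_prime_pow_iff P.orderOf_eq (by omega), pow_dvd_iff_le_emultiplicity,
    emultiplicity_mul hpZ] at hmem
  have hgeom : σ * (e ^ p ^ β - 1) = e ^ p ^ c - 1 := by
    rw [hσ, geom_sum_mul, ← pow_mul, ← pow_add, Nat.add_sub_cancel' hβc]
  have hνσ := congrArg (emultiplicity (p : ℤ)) hgeom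
  rw [emultiplicity_mul hpZ, Int.emultiplicity_pow_sub_one hp hodd P.dvd_sub_one,
    Int.emultiplicity_pow_sub_one hp hodd P.dvd_sub_one, P.emultiplicity_sub_one,
    Int.emultiplicity_natCast_prime_pow hp, Int.emultiplicity_natCast_prime_pow hp] at hνσ
  convert hmem using 2
  generalize emultiplicity (p : ℤ) σ = k at hνσ ⊢
  induction k using ENat.recTopCoe with
  | top => exact absurd hνσ.symm (by exact_mod_cast ENat.natCast_ne_top (v + c))
  | coe k => norm_cast at hνσ ⊢; omega

theorem map_centralizer_le (P : MetacyclicPresentation p a b e v c n) (hodd : Odd p) {α : ℕ} :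
    (centralizer {a ^ p ^ α}).map (QuotientGroup.mk' (zpowers a)) ≤
      zpowers ((b : G ⧸ zpowers a) ^ p ^ (c - α)) := by
  have hp : p.Prime := Fact.out
  rintro _ ⟨x, hx, rfl⟩
  have hfin : IsOfFinOrder (b : G ⧸ zpowers a) :=
    orderOf_pos_iff.mp (P.orderOf_mk_eq ▸ pow_pos hp.pos n)
  obtain ⟨j, hj⟩ := (Submonoid.mem_powers_iff _ _).mp
    (hfin.mem_powers_iff_mem_zpowers.mpr (P.zpowers_mk_eq_top ▸ mem_top (x : G ⧸ zpowers a)))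
  obtain ⟨X, hX⟩ := mem_zpowers_iff.mp ((QuotientGroup.eq_one_iff (N := zpowers a)
    (x * (b ^ j)⁻¹)).mp (by simp [hj]))
  have hcomm : Commute (a ^ ((p ^ α : ℕ) : ℤ)) (b ^ j) := by
    rw [show b ^ j = (a ^ X)⁻¹ * x by rw [hX]; group, zpow_natCast]
    exact (((Commute.refl a).pow_left _).zpow_right X).inv_right.mul_right
      (mem_centralizer_singleton_iff.mp hx).symm
  rw [P.commute_zpow_pow_iff hodd, Int.emultiplicity_natCast_prime_pow hp] at hcomm
  obtain ⟨d, rfl⟩ : p ^ (c - α) ∣ j := by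
    rw [← Int.natCast_dvd_natCast, Nat.cast_pow, pow_dvd_iff_le_emultiplicity,
      ENat.natCast_sub, tsub_le_iff_right, add_comm]
    exact hcomm
  rw [QuotientGroup.mk'_apply, ← hj, pow_mul]
  exact pow_mem (mem_zpowers _) d

/-- The centralizer contains `a ^ i * b ^ p ^ (c - α)` for any `i` with
`i (e ^ p ^ β - 1) ≡ t (e ^ p ^ (c - α) - 1)` modulo `|a|`; `ht` makes this congruence solvable. -/
theorem exists_mem_centralizer_mk_eq (P : MetacyclicPresentation p a b e v c n) (hodd : Odd p)
    {α β : ℕ} {t : ℤ} (hαc : α ≤ c) (hβc : β ≤ c)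
    (ht : (α : ℕ∞) ≤ emultiplicity (p : ℤ) t + (c - β : ℕ)) :
    ∃ x ∈ centralizer (closure {a ^ p ^ α, a ^ t * b ^ p ^ β} : Set G),
      (x : G ⧸ zpowers a) = (b : G ⧸ zpowers a) ^ p ^ (c - α) := by
  have hp : p.Prime := Fact.out
  have hsol : a ^ (t * (e ^ p ^ (c - α) - 1)) ∈ zpowers (a ^ (e ^ p ^ β - 1)) := by
    refine zpow_mem_zpowers_zpow_of_emultiplicity_le hp P.orderOf_eq ?_
    rw [emultiplicity_mul (Nat.prime_iff_prime_int.mp hp),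
      Int.emultiplicity_pow_sub_one hp hodd P.dvd_sub_one,
      Int.emultiplicity_pow_sub_one hp hodd P.dvd_sub_one, P.emultiplicity_sub_one,
      Int.emultiplicity_natCast_prime_pow hp, Int.emultiplicity_natCast_prime_pow hp]
    generalize emultiplicity (p : ℤ) t = k at ht ⊢
    induction k using ENat.recTopCoe with
    | top => simp
    | coe k => norm_cast at ht ⊢; omega
  obtain ⟨i, hi⟩ := mem_zpowers_iff.mp hsol
  rw [← zpow_mul, mul_comm] at hi
  refine ⟨a ^ i * b ^ p ^ (c - α), mem_centralizer_closure_pair.mpr ⟨?_, ?_⟩,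
    QuotientGroup.mk_zpow_mul_pow _ _⟩
  · exact (((Commute.refl a).pow_left _).zpow_right i).mul_right
      (P.commute_pow_prime_pow hodd (by omega : c ≤ α + (c - α)))
  · exact ((commute_zpow_mul_pow_iff_of_conj_eq P.conj_eq).mpr hi.symm).symm

theorem mCD_eq_of_center_le (P : MetacyclicPresentation p a b e v c n) (hodd : Odd p)
    {H : Subgroup G} (hZH : center G ≤ H) : mCD H = p ^ (2 * (v + n)) := by
  have hp : p.Prime := Fact.out
  have hcn := P.c_le_n hodd
  obtain ⟨α, β, t, hαc, hβc, hα, hβ, ht⟩ := P.exists_invariants_of_center_le hodd hZH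
  have hH : H = closure {a ^ p ^ α, a ^ t * b ^ p ^ β} :=
    eq_closure_pair_of_inf_ker_eq_zpowers (QuotientGroup.mk' (zpowers a)) ht
      (by rwa [QuotientGroup.ker_mk'])
      (by rw [hβ, QuotientGroup.mk'_apply, QuotientGroup.mk_zpow_mul_pow])
  have hCπ : (centralizer (H : Set G)).map (QuotientGroup.mk' (zpowers a)) =
      zpowers ((b : G ⧸ zpowers a) ^ p ^ (c - α)) := by
    obtain ⟨x, hx, hxb⟩ := P.exists_mem_centralizer_mk_eq hodd hαc hβc
      (P.le_emultiplicity_of_center_le hodd hZH hαc hβc hα ht)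
    refine le_antisymm (le_trans (map_mono (centralizer_le ?_)) (P.map_centralizer_le hodd))
      (zpowers_le.mpr ⟨x, hH ▸ hx, hxb⟩)
    exact Set.singleton_subset_iff.mpr (hH ▸ subset_closure (Set.mem_insert _ _))
  have hcardH : Nat.card H = p ^ (v + c - α) * p ^ (n - β) := by
    rw [card_eq_card_inf_ker_mul_card_map (QuotientGroup.mk' (zpowers a)),
      QuotientGroup.ker_mk', hα, hβ, card_zpowers_pow_prime_pow hp.ne_zero P.orderOf_eq (by omega),
      card_zpowers_pow_prime_pow hp.ne_zero P.orderOf_mk_eq (by omega)]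
  have hcardC : Nat.card (centralizer (H : Set G)) =
      p ^ (v + c - (c - β)) * p ^ (n - (c - α)) := by
    rw [card_eq_card_inf_ker_mul_card_map (QuotientGroup.mk' (zpowers a)), hCπ,
      QuotientGroup.ker_mk', hH, P.inf_centralizer_eq hodd hβc,
      card_zpowers_pow_prime_pow hp.ne_zero P.orderOf_eq (by omega),
      card_zpowers_pow_prime_pow hp.ne_zero P.orderOf_mk_eq (by omega)]
  rw [mCD, hcardH, hcardC, ← pow_add, ← pow_add, ← pow_add]
  congr 1
  omega

end MetacyclicPresentation

theorem stmt10 {p : ℕ} [Fact p.Prime] (hp : Odd p) {G : Type*} [Group G] [Finite G]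
    (hG : IsPGroup p G)
    (hmeta : ∃ N : Subgroup G, ∃ _ : N.Normal, IsCyclic N ∧ IsCyclic (G ⧸ N)) :
    CD G = {H : Subgroup G | Subgroup.center G ≤ H} := by
  obtain ⟨N, hN, hNcyc, hQcyc⟩ := hmeta
  obtain ⟨a, rfl⟩ := (Subgroup.isCyclic_iff_exists_zpowers_eq_top N).mp hNcyc
  obtain ⟨q, hq⟩ := _root_.isCyclic_iff_exists_zpowers_eq_top.mp hQcyc
  obtain ⟨b, rfl⟩ := QuotientGroup.mk_surjective q
  by_cases hab : Commute a b
  · have hZ := center_eq_top_of_commute (closure_pair_eq_top_of_zpowers_mk_eq_top hq) hab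
    exact CD_eq_setOf_center_le (V := mCD ⊤) fun H hH => by rw [hZ, top_le_iff] at hH; rw [hH]
  · obtain ⟨e, v, c, n, P⟩ := exists_metacyclicPresentation hG hq hab
    exact CD_eq_setOf_center_le fun H hH => P.mCD_eq_of_center_le hp hH
end

section
/- Let G be a nonabelian group of order p³ for a prime p. Then CD(G) = {H : Z(G) ≤ H ≤ G} and |CD(G)| = p + 3. -/
open Subgroup

section General

variable {G : Type*} [Group G]

theorem mCD_center : mCD (center G) = Nat.card (center G) * Nat.card G := by
  rw [mCD, centralizer_eq_top_iff_subset.2 subset_rfl, card_top]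

theorem mCD_top : mCD (⊤ : Subgroup G) = Nat.card G * Nat.card (center G) := by
  rw [mCD, coe_top, centralizer_univ, card_top]

theorem mStar_eq_of_forall_le {n : ℕ} (hle : ∀ H : Subgroup G, mCD H ≤ n) {K : Subgroup G}
    (hK : mCD K = n) : mStar G = n :=
  le_antisymm (csSup_le (Set.range_nonempty _) (Set.forall_mem_range.2 hle))
    (hK ▸ le_csSup ⟨n, Set.forall_mem_range.2 hle⟩ ⟨K, rfl⟩)

theorem Subgroup.zpowers_eq_of_card_eq_prime {p : ℕ} [Fact p.Prime] {K : Subgroup G}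
    (hK : Nat.card K = p) {x : G} (hxK : x ∈ K) (hx : x ≠ 1) : zpowers x = K := by
  have : Finite K := Nat.finite_of_card_ne_zero (hK ▸ (Fact.out : p.Prime).ne_zero)
  refine eq_of_le_of_card_ge (zpowers_le.2 hxK) ?_
  rcases (Fact.out : p.Prime).eq_one_or_self_of_dvd _ (hK ▸ K.orderOf_dvd_natCard hxK) with h | h
  · exact absurd (orderOf_eq_one_iff.1 h) hx
  · rw [Nat.card_zpowers, h, hK]

open Classical in
theorem card_filter_zpowers_eq_of_card_eq_prime {p : ℕ} [Fact p.Prime] [Fintype G]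
    {K : Subgroup G} (hK : Nat.card K = p) :
    ((Finset.univ.erase (1 : G)).filter (zpowers · = K)).card = p - 1 := by
  have hfiber : (Finset.univ.erase (1 : G)).filter (zpowers · = K) =
      (Finset.univ.filter (· ∈ K)).erase 1 := by
    ext x
    simp only [Finset.mem_filter, Finset.mem_erase, Finset.mem_univ, and_true, true_and]
    exact ⟨fun ⟨hx, hxK⟩ => ⟨hx, hxK ▸ mem_zpowers x⟩,
      fun ⟨hx, hxK⟩ => ⟨hx, zpowers_eq_of_card_eq_prime hK hxK hx⟩⟩
  rw [hfiber, Finset.card_erase_of_mem (Finset.mem_filter.2 ⟨Finset.mem_univ _, K.one_mem⟩),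
    ← Fintype.card_subtype, ← Nat.card_eq_fintype_card, hK]

theorem IsPGroup.card_mul_le_of_ne_top {p : ℕ} [Fact p.Prime] [Finite G] (hG : IsPGroup p G)
    {K : Subgroup G} (hK : K ≠ ⊤) : Nat.card K * p ≤ Nat.card G := by
  obtain ⟨n, hn⟩ := hG.index K
  have hn0 : n ≠ 0 := by rintro rfl; exact hK (index_eq_one.1 (by simpa using hn))
  rw [← K.card_mul_index, hn]
  exact Nat.mul_le_mul_left _ (Nat.le_self_pow hn0 p)

theorem IsPGroup.card_centralizer_mul_le {p : ℕ} [Fact p.Prime] [Finite G] (hG : IsPGroup p G)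
    {H : Subgroup G} (hH : ¬ H ≤ center G) : Nat.card (centralizer (H : Set G)) * p ≤ Nat.card G :=
  hG.card_mul_le_of_ne_top fun h => hH (centralizer_eq_top_iff_subset.1 h)

end General

section PrimeSquare

variable {p : ℕ} [Fact p.Prime] {Q : Type*} [Group Q] [Finite Q]

theorem eq_bot_or_eq_top_or_card_eq_prime_of_card_eq_sq (hQ : Nat.card Q = p ^ 2)
    (K : Subgroup Q) : K = ⊥ ∨ K = ⊤ ∨ Nat.card K = p := by
  obtain ⟨k, hk, hKk⟩ := (Nat.dvd_prime_pow Fact.out).1 (hQ ▸ K.card_subgroup_dvd_card)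
  interval_cases k
  · exact .inl (eq_bot_of_card_eq K hKk)
  · exact .inr (.inr (by simpa using hKk))
  · exact .inr (.inl (eq_top_of_card_eq K (hKk.trans hQ.symm)))

theorem orderOf_eq_prime_of_card_eq_sq_of_not_isCyclic (hQ : Nat.card Q = p ^ 2)
    (hQc : ¬ IsCyclic Q) {x : Q} (hx : x ≠ 1) : orderOf x = p := by
  rcases eq_bot_or_eq_top_or_card_eq_prime_of_card_eq_sq hQ (zpowers x) with h | h | h
  · exact absurd (zpowers_eq_bot.1 h) hx
  · exact absurd (isCyclic_of_orderOf_eq_card x (by rw [← Nat.card_zpowers, h, card_top])) hQc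
  · rwa [Nat.card_zpowers] at h

theorem card_filter_card_eq_prime_of_card_eq_sq [Fintype (Subgroup Q)]
    (hQ : Nat.card Q = p ^ 2) (hQc : ¬ IsCyclic Q) :
    (Finset.univ.filter fun K : Subgroup Q => Nat.card K = p).card = p + 1 := by
  classical
  have := Fintype.ofFinite Q
  have hp := (Fact.out : p.Prime)
  have hmaps : ∀ x ∈ Finset.univ.erase (1 : Q),
      zpowers x ∈ Finset.univ.filter fun K : Subgroup Q => Nat.card K = p := fun x hx => by
    rw [Finset.mem_filter, Nat.card_zpowers,
      orderOf_eq_prime_of_card_eq_sq_of_not_isCyclic hQ hQc (Finset.ne_of_mem_erase hx)]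
    exact ⟨Finset.mem_univ _, rfl⟩
  have hcount := Finset.card_eq_sum_card_fiberwise hmaps
  rw [Finset.sum_congr rfl fun K hK =>
      card_filter_zpowers_eq_of_card_eq_prime (Finset.mem_filter.1 hK).2,
    Finset.sum_const, smul_eq_mul, Finset.card_erase_of_mem (Finset.mem_univ _),
    Finset.card_univ, ← Nat.card_eq_fintype_card, hQ] at hcount
  refine Nat.eq_of_mul_eq_mul_right (Nat.sub_pos_of_lt hp.one_lt) ?_
  rw [← hcount, ← Nat.sq_sub_sq, one_pow]

theorem card_subgroup_eq_prime_add_three (hQ : Nat.card Q = p ^ 2) (hQc : ¬ IsCyclic Q) :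
    Nat.card (Subgroup Q) = p + 3 := by
  classical
  have := Fintype.ofFinite (Subgroup Q)
  have hp := (Fact.out : p.Prime)
  set primeOrder := Finset.univ.filter fun K : Subgroup Q => Nat.card K = p
  have hsq : p < p ^ 2 := lt_self_pow₀ hp.one_lt one_lt_two
  have : Nontrivial Q := Finite.one_lt_card_iff_nontrivial.1 (hQ ▸ hp.one_lt.trans hsq)
  have huniv : Finset.univ = insert ⊥ (insert ⊤ primeOrder) := by
    ext K
    simp only [Finset.mem_univ, Finset.mem_insert, Finset.mem_filter, true_and, true_iff,
      primeOrder]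
    exact eq_bot_or_eq_top_or_card_eq_prime_of_card_eq_sq hQ K
  have hbot : ⊥ ∉ insert ⊤ primeOrder := by
    simp [primeOrder, hp.ne_one.symm]
  have htop : ⊤ ∉ primeOrder := by
    rw [Finset.mem_filter, card_top, hQ]
    exact fun h => hsq.ne' h.2
  rw [Nat.card_eq_fintype_card, ← Finset.card_univ, huniv, Finset.card_insert_of_notMem hbot,
    Finset.card_insert_of_notMem htop, card_filter_card_eq_prime_of_card_eq_sq hQ hQc]

end PrimeSquare

section PrimeCube

variable {p : ℕ} [Fact p.Prime] {G : Type*} [Group G]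

theorem not_isCyclic_quotient_center (hna : ¬ ∀ a b : G, a * b = b * a) :
    ¬ IsCyclic (G ⧸ center G) := fun _ =>
  hna (isMulCommutative_of_isCyclic_quotient_center_self G).is_comm.comm

theorem card_center_eq_prime_of_card_eq_cube (hG : Nat.card G = p ^ 3)
    (hna : ¬ ∀ a b : G, a * b = b * a) : Nat.card (center G) = p := by
  obtain ⟨k, hk0, hZk⟩ := IsPGroup.card_center_eq_prime_pow hG three_pos
  have hk : k ≤ 1 := by
    by_contra! hk
    have hGZ := (center G).card_eq_card_quotient_mul_card_subgroup
    rw [hG, hZk] at hGZ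
    have hquot : Nat.card (G ⧸ center G) ∣ p := by
      refine Nat.dvd_of_mul_dvd_mul_right (pow_pos (Fact.out : p.Prime).pos 2) ?_
      calc Nat.card (G ⧸ center G) * p ^ 2 ∣ Nat.card (G ⧸ center G) * p ^ k :=
            mul_dvd_mul_left _ (pow_dvd_pow p hk)
        _ = p * p ^ 2 := by rw [← hGZ]; ring
    exact not_isCyclic_quotient_center hna (isCyclic_of_card_dvd_prime hquot)
  obtain rfl : k = 1 := by omega
  rwa [pow_one] at hZk

theorem card_quotient_center_eq_sq (hG : Nat.card G = p ^ 3) (hZ : Nat.card (center G) = p) :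
    Nat.card (G ⧸ center G) = p ^ 2 := by
  have hGZ := (center G).card_eq_card_quotient_mul_card_subgroup
  rw [hG, hZ] at hGZ
  exact Nat.eq_of_mul_eq_mul_right (Fact.out : p.Prime).pos (by rw [← hGZ]; ring)

variable [Finite G]

theorem centralizer_eq_self_of_card_eq_sq (hG : Nat.card G = p ^ 3)
    (hZ : Nat.card (center G) = p) {H : Subgroup G} (hH : Nat.card H = p ^ 2) :
    centralizer (H : Set G) = H := by
  have := IsPGroup.isMulCommutative_of_card_eq_prime_sq hH
  have hp := (Fact.out : p.Prime)
  have hHZ : ¬ H ≤ center G := fun h => by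
    have := card_le_of_le h
    rw [hH, hZ] at this
    exact (lt_self_pow₀ hp.one_lt one_lt_two).not_ge this
  refine (eq_of_le_of_card_ge (le_centralizer H) ?_).symm
  have := (IsPGroup.of_card hG).card_centralizer_mul_le hHZ
  rw [hG, pow_succ] at this
  rw [hH]
  exact Nat.le_of_mul_le_mul_right this hp.pos

theorem mCD_eq_of_center_le (hG : Nat.card G = p ^ 3) (hZ : Nat.card (center G) = p)
    {H : Subgroup G} (hZH : center G ≤ H) : mCD H = p ^ 4 := by
  have hp := (Fact.out : p.Prime)
  obtain ⟨k, hk, hHk⟩ := (Nat.dvd_prime_pow hp).1 (hG ▸ H.card_subgroup_dvd_card)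
  interval_cases k
  · have := card_le_of_le hZH
    rw [hZ, hHk] at this
    exact absurd this hp.one_lt.not_ge
  · obtain rfl := eq_of_le_of_card_ge hZH (by rw [hZ, hHk, pow_one])
    rw [mCD_center, hZ, hG]
    ring
  · rw [mCD, centralizer_eq_self_of_card_eq_sq hG hZ hHk, hHk]
    ring
  · obtain rfl := eq_top_of_card_eq H (hHk.trans hG.symm)
    rw [mCD_top, hG, hZ]
    ring

theorem mCD_le_of_not_center_le (hG : Nat.card G = p ^ 3) (hZ : Nat.card (center G) = p)
    {H : Subgroup G} (hZH : ¬ center G ≤ H) : mCD H ≤ p ^ 3 := by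
  obtain ⟨k, hk, hHk⟩ := (Nat.dvd_prime_pow Fact.out).1 (hG ▸ H.card_subgroup_dvd_card)
  interval_cases k
  · rw [mCD, hHk, pow_zero, one_mul, ← hG]
    exact card_le_card_group _
  · have hHZ : ¬ H ≤ center G := fun h =>
      hZH (eq_of_le_of_card_ge h (by rw [hZ, hHk, pow_one])).ge
    have := (IsPGroup.of_card hG).card_centralizer_mul_le hHZ
    rw [mCD, hHk, pow_one, mul_comm]
    rwa [hG] at this
  · exact absurd (centralizer_eq_self_of_card_eq_sq hG hZ hHk ▸ center_le_centralizer _) hZH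
  · exact absurd (eq_top_of_card_eq H (hHk.trans hG.symm) ▸ le_top) hZH

end PrimeCube

theorem stmt11 {p : ℕ} [Fact p.Prime] {G : Type*} [Group G] [Finite G]
    (hcard : Nat.card G = p ^ 3) (hna : ¬ ∀ a b : G, a * b = b * a) :
    CD G = {H : Subgroup G | Subgroup.center G ≤ H} ∧
      Nat.card (CD G) = p + 3 := by
  have hZ := card_center_eq_prime_of_card_eq_cube hcard hna
  have hp4 : p ^ 3 < p ^ 4 := Nat.pow_lt_pow_right (Fact.out : p.Prime).one_lt (by norm_num)
  have hmCD_iff (H : Subgroup G) : mCD H = p ^ 4 ↔ center G ≤ H :=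
    ⟨fun h => by_contra fun hZH => (mCD_le_of_not_center_le hcard hZ hZH).not_gt (h ▸ hp4),
      mCD_eq_of_center_le hcard hZ⟩
  have hstar : mStar G = p ^ 4 :=
    mStar_eq_of_forall_le (fun H => (em (center G ≤ H)).elim
      (fun h => (mCD_eq_of_center_le hcard hZ h).le)
      (fun h => (mCD_le_of_not_center_le hcard hZ h).trans hp4.le))
      (mCD_eq_of_center_le hcard hZ le_rfl)
  have hCD : CD G = {H : Subgroup G | center G ≤ H} := by
    ext H
    change mCD H = mStar G ↔ center G ≤ H
    rw [hstar, hmCD_iff]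
  refine ⟨hCD, ?_⟩
  rw [hCD, ← card_subgroup_eq_prime_add_three (card_quotient_center_eq_sq hcard hZ)
    (not_isCyclic_quotient_center hna)]
  exact Nat.card_congr (QuotientGroup.comapMk'OrderIso (center G)).symm.toEquiv
end

section
/- Let G be a finite p-group with an abelian maximal subgroup A (index p) and |G| ≥ p⁴, and suppose G is of maximal class (nilpotency class |G| has order pⁿ and class n−1, so |Z(G)| = p). Then CD(G) = {A}. -/
open Subgroup

theorem isMulCommutative_of_card_eq_prime_pow_of_le_two {p m : ℕ} [Fact p.Prime] {Q : Type*}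
    [Group Q] (hQ : Nat.card Q = p ^ m) (hm : m ≤ 2) : IsMulCommutative Q := by
  interval_cases m
  · have : Subsingleton Q := (Nat.card_eq_one_iff_unique.mp (by simpa using hQ)).1
    exact ⟨⟨fun _ _ => Subsingleton.elim _ _⟩⟩
  · have : IsCyclic Q := isCyclic_of_prime_card (by simpa using hQ)
    let := IsCyclic.commGroup (α := Q)
    infer_instance
  · exact IsPGroup.isMulCommutative_of_card_eq_prime_sq hQ

theorem IsPGroup.card_center_mul_prime_pow_three_le {p : ℕ} [Fact p.Prime] {G : Type*} [Group G]
    [Finite G] [Group.IsNilpotent G] (hG : IsPGroup p G) (hc : 3 ≤ Group.nilpotencyClass G) :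
    Nat.card (center G) * p ^ 3 ≤ Nat.card G := by
  obtain ⟨m, hm⟩ := IsPGroup.iff_card.mp (hG.to_quotient (center G))
  have h3m : 3 ≤ m := by
    by_contra! hm2
    have hQ := Group.IsNilpotent.nilpotencyClass_le_one_iff.mpr
      (isMulCommutative_of_card_eq_prime_pow_of_le_two hm (by omega))
    rw [Group.nilpotencyClass_quotient_center] at hQ
    omega
  calc Nat.card (center G) * p ^ 3 ≤ Nat.card (center G) * p ^ m := by
        gcongr
        exact (Fact.out : p.Prime).one_lt.le
    _ = Nat.card G := by rw [← hm, ← index_eq_card, card_mul_index]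

theorem Subgroup.isCoatom_of_index_prime {G : Type*} [Group G] {H : Subgroup G}
    (h : H.index.Prime) : IsCoatom H := by
  refine ⟨fun hH => Nat.not_prime_one (by rwa [hH, index_top] at h), fun K hK => ?_⟩
  have hmul := relIndex_mul_index hK.le
  rcases h.eq_one_or_self_of_dvd _ (Dvd.intro_left _ hmul) with hK1 | hKH
  · exact index_eq_one.mp hK1
  · rw [hKH, Nat.mul_eq_right h.ne_zero, relIndex_eq_one] at hmul
    exact absurd hmul hK.not_ge

theorem Subgroup.card_mul_relIndex {G : Type*} [Group G] {H K : Subgroup G} (h : H ≤ K) :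
    Nat.card H * H.relIndex K = Nat.card K := by
  rw [← relIndex_bot_left, ← relIndex_bot_left, relIndex_mul_relIndex _ _ _ bot_le h]

theorem IsPGroup.card_mul_prime_le_of_lt {p : ℕ} [Fact p.Prime] {G : Type*} [Group G] [Finite G]
    (hG : IsPGroup p G) {H K : Subgroup G} (h : H < K) : Nat.card H * p ≤ Nat.card K := by
  obtain ⟨k, hk⟩ := (hG.to_subgroup K).index (H.subgroupOf K)
  have hk0 : k ≠ 0 := by
    rintro rfl
    exact h.not_ge (relIndex_eq_one.mp hk)
  calc Nat.card H * p ≤ Nat.card H * H.relIndex K := by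
        gcongr
        exact (Nat.le_self_pow hk0 p).trans_eq hk.symm
    _ = Nat.card K := card_mul_relIndex h.le

theorem CD_eq_singleton_of_forall_mCD_lt {G : Type*} [Group G] {A : Subgroup G}
    (h : ∀ H, H ≠ A → mCD H < mCD A) : CD G = {A} := by
  have hstar : mStar G = mCD A :=
    IsGreatest.csSup_eq ⟨⟨A, rfl⟩, by
      rintro _ ⟨H, rfl⟩
      rcases eq_or_ne H A with rfl | hH
      exacts [le_rfl, (h H hH).le]⟩
  ext H
  simp only [CD, Set.mem_ofPred_eq, Set.mem_singleton_iff, hstar]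
  exact ⟨fun hH => by_contra fun hne => (h H hne).ne hH, fun hH => hH ▸ rfl⟩

section AbelianMaximalSubgroup

variable {G : Type*} [Group G] {A : Subgroup G}

theorem inf_centralizer_le_center (hA : IsCoatom A) (hAc : A ≤ centralizer A) {H : Subgroup G}
    (hH : ¬H ≤ A) : A ⊓ centralizer H ≤ center G := by
  rintro a ⟨haA, haH⟩
  have hsup : A ⊔ H = ⊤ := hA.lt_iff.mp (left_lt_sup.mpr hH)
  have htop : centralizer (zpowers a : Set G) = ⊤ := by
    refine eq_top_iff.mpr (hsup ▸ sup_le ?_ ?_)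
    · exact le_centralizer_iff.mpr (zpowers_le.mpr (hAc haA))
    · exact le_centralizer_iff.mpr (zpowers_le.mpr haH)
  exact centralizer_eq_top_iff_subset.mp htop (mem_zpowers a)

theorem card_centralizer_le_of_not_le [Finite G] (hA : A.index.Prime) (hAc : A ≤ centralizer A)
    {H : Subgroup G} (hH : ¬H ≤ A) :
    Nat.card (centralizer (H : Set G)) ≤ A.index * Nat.card (center G) := by
  set C := centralizer (H : Set G)
  have hrel : A.relIndex C ≤ A.index := by
    have hne : A.relIndex ⊤ ≠ 0 := by rw [relIndex_top_right]; exact hA.ne_zero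
    simpa only [relIndex_top_right] using relIndex_le_of_le_right le_top hne
  calc Nat.card C = Nat.card (A ⊓ C : Subgroup G) * A.relIndex C := by
        rw [← inf_relIndex_right, card_mul_relIndex inf_le_right]
    _ ≤ Nat.card (center G) * A.index := by
        gcongr
        exact card_le_of_le (inf_centralizer_le_center (isCoatom_of_index_prime hA) hAc hH)
    _ = A.index * Nat.card (center G) := mul_comm _ _

variable {p : ℕ} [Fact p.Prime] [Finite G] (hG : IsPGroup p G) (hAc : A ≤ centralizer A)
  (hidx : A.index = p) (hZ : Nat.card (center G) * p ^ 2 ≤ Nat.card A)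
include hAc hidx hZ

theorem centralizer_eq_self_of_card_center : centralizer (A : Set G) = A := by
  have hA : IsCoatom A := isCoatom_of_index_prime (hidx ▸ Fact.out)
  refine (hA.le_iff.mp hAc).resolve_left fun htop => ?_
  have hAZ := card_le_of_le (centralizer_eq_top_iff_subset.mp htop)
  have hp2 : 1 < p ^ 2 := Nat.one_lt_pow two_ne_zero (Fact.out : p.Prime).one_lt
  have hz : 0 < Nat.card (center G) := Nat.card_pos
  nlinarith

include hG in
theorem mCD_mul_prime_le_sq {H : Subgroup G} (hH : H ≠ A) : mCD H * p ≤ Nat.card A ^ 2 := by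
  have hA : IsCoatom A := isCoatom_of_index_prime (hidx ▸ Fact.out)
  have hN : Nat.card G = Nat.card A * p := by rw [← hidx, card_mul_index]
  have hcentral : Nat.card (center G) * Nat.card G * p ≤ Nat.card A ^ 2 := by
    calc Nat.card (center G) * Nat.card G * p = Nat.card (center G) * p ^ 2 * Nat.card A := by
          rw [hN]; ring
      _ ≤ Nat.card A ^ 2 := (Nat.mul_le_mul_right _ hZ).trans_eq (sq _).symm
  by_cases hHA : H ≤ A
  · rcases hA.le_iff.mp (hAc.trans (centralizer_le hHA)) with htop | hself
    · have hHZ : H ≤ center G := centralizer_eq_top_iff_subset.mp htop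
      calc mCD H * p ≤ Nat.card (center G) * Nat.card G * p := by
            unfold mCD; gcongr
            exacts [card_le_of_le hHZ, card_le_card_group _]
        _ ≤ Nat.card A ^ 2 := hcentral
    · calc mCD H * p = Nat.card H * p * Nat.card A := by rw [mCD, hself]; ring
        _ ≤ Nat.card A ^ 2 := by
          rw [sq]; gcongr; exact hG.card_mul_prime_le_of_lt (lt_of_le_of_ne hHA hH)
  · by_cases htop : H = ⊤
    · subst htop
      calc mCD (⊤ : Subgroup G) * p = Nat.card (center G) * Nat.card G * p := by
            rw [mCD, coe_top, centralizer_univ, card_top, mul_comm (Nat.card G)]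
        _ ≤ Nat.card A ^ 2 := hcentral
    · have hHcard : Nat.card H ≤ Nat.card A := by
        have := hG.card_mul_prime_le_of_lt (lt_top_iff_ne_top.mpr htop)
        rw [card_top, hN] at this
        exact Nat.le_of_mul_le_mul_right this (Fact.out : p.Prime).pos
      have hC := card_centralizer_le_of_not_le (hidx ▸ Fact.out) hAc hHA
      rw [hidx] at hC
      calc mCD H * p ≤ Nat.card A * (p * Nat.card (center G)) * p := by
            unfold mCD; gcongr
        _ = Nat.card (center G) * p ^ 2 * Nat.card A := by ring
        _ ≤ Nat.card A ^ 2 := (Nat.mul_le_mul_right _ hZ).trans_eq (sq _).symm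

include hG in
theorem mCD_lt_mCD_of_ne {H : Subgroup G} (hH : H ≠ A) : mCD H < mCD A := by
  have hle := mCD_mul_prime_le_sq hG hAc hidx hZ hH
  have hA : mCD A = Nat.card A ^ 2 := by
    rw [mCD, centralizer_eq_self_of_card_center hAc hidx hZ, sq]
  have hp := (Fact.out : p.Prime).one_lt
  have hApos : 0 < Nat.card A ^ 2 := pow_pos Nat.card_pos 2
  rw [hA]
  nlinarith

end AbelianMaximalSubgroup

theorem stmt12_general {p n : ℕ} [Fact p.Prime] {G : Type*} [Group G] [Finite G]
    [Group.IsNilpotent G] (hG : IsPGroup p G) (A : Subgroup G)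
    (hA : ∀ x y : A, x * y = y * x) (hidx : A.index = p)
    (hn : 4 ≤ n)
    (hclass : Group.nilpotencyClass G = n - 1) :
    CD G = {A} := by
  have hAc : A ≤ centralizer A := le_centralizer_iff_isMulCommutative.mpr ⟨⟨hA⟩⟩
  have hZ : Nat.card (center G) * p ^ 2 ≤ Nat.card A := by
    have h3 := hG.card_center_mul_prime_pow_three_le (by omega)
    rw [← card_mul_index A, hidx, pow_succ, ← mul_assoc] at h3
    exact Nat.le_of_mul_le_mul_right h3 (Fact.out : p.Prime).pos
  exact CD_eq_singleton_of_forall_mCD_lt fun H hH => mCD_lt_mCD_of_ne hG hAc hidx hZ hH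

theorem stmt12 {p n : ℕ} [Fact p.Prime] {G : Type*} [Group G] [Finite G]
    [Group.IsNilpotent G] (hG : IsPGroup p G) (A : Subgroup G)
    (hA : ∀ x y : A, x * y = y * x) (hidx : A.index = p)
    (hcard : Nat.card G = p ^ n) (hn : 4 ≤ n)
    (hclass : Group.nilpotencyClass G = n - 1) :
    CD G = {A} :=
  stmt12_general hG A hA hidx hn hclass
end
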